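/- arXiv:1209.5926 — 8 statements merged into one kernel-verified Lean document; each statement's English description precedes it below -/
import Mathlib

section
/- Let M ≥ 1 and let F be an M×M Hermitian positive semidefinite complex matrix whose diagonal entries f_i := F_{i,i} satisfy f_1 ≥ f_2 ≥ … ≥ f_M ≥ 0, assumption (A1) with constant α > 0, and assumption (A2) with constants f_+ > 0 and γ > 1. Set ρ_+ := (1+α) f_+. Then for every x > 0, the number N(x;F) of eigenvalues of F (counted with multiplicity) strictly greater than x satisfies N(x;F) ≤ min(M, ρ_+^{1/γ} x^{−1/γ}). -/
/-!
Let `n` be the number of eigenvalues of `F` exceeding `x`. The span of the corresponding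
eigenvectors has dimension `n`, so it contains a nonzero vector `v` vanishing on the first
`n - 1` coordinates, and `x ‖v‖² ≤ ⟪v, F v⟫`. For such a `v`, the diagonal part of `⟪v, F v⟫` is
at most `f_n ‖v‖²` by monotonicity, and every off-diagonal pair `F_{kj}` with `n - 1 ≤ k < j`
contributes at most `|F_{kj}| ‖v‖²`, so (A1) gives `⟪v, F v⟫ ≤ (1 + α) f_n ‖v‖²`. Hence
`x ≤ (1 + α) f_n ≤ ρ₊ n^{-γ}` by (A2), which is the claim solved for `n`.
-/

open scoped ComplexOrder
open Finset RCLike Matrix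

section Spectral

variable {𝕜 : Type*} [RCLike 𝕜]

theorem Orthonormal.mul_norm_sq_le_re_inner_of_mem_span {E ι : Type*}
    [NormedAddCommGroup E] [InnerProductSpace 𝕜 E] [Fintype ι] {v : ι → E}
    (hv : Orthonormal 𝕜 v) {T : E →ₗ[𝕜] E} {μ : ι → ℝ} (hT : ∀ i, T (v i) = (μ i : 𝕜) • v i)
    {x : ℝ} (hx : ∀ i, x ≤ μ i) {w : E} (hw : w ∈ Submodule.span 𝕜 (Set.range v)) :
    x * ‖w‖ ^ 2 ≤ re (inner 𝕜 w (T w)) := by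
  obtain ⟨c, rfl⟩ := (Submodule.mem_span_range_iff_exists_fun 𝕜).mp hw
  have hTw : T (∑ i, c i • v i) = ∑ i, (c i * μ i) • v i := by
    simp only [map_sum, map_smul, hT, smul_smul]
  rw [hTw, hv.inner_sum, ← inner_self_eq_norm_sq (𝕜 := 𝕜), hv.inner_sum]
  simp only [map_sum, mul_sum]
  gcongr with i
  rw [← mul_assoc, RCLike.conj_mul, ← ofReal_pow, ← ofReal_mul, ofReal_re, ofReal_re, mul_comm]
  exact mul_le_mul_of_nonneg_left (hx i) (by positivity)

theorem EuclideanSpace.exists_mem_ne_zero_forall_apply_eq_zero {n : Type*} [Fintype n]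
    (S : Submodule 𝕜 (EuclideanSpace 𝕜 n)) (s : Finset n)
    (hs : #s < Module.finrank 𝕜 S) : ∃ w ∈ S, w ≠ 0 ∧ ∀ j ∈ s, w j = 0 := by
  let φ : S →ₗ[𝕜] s → 𝕜 :=
    LinearMap.pi fun j => (EuclideanSpace.projₗ (j : n)).comp S.subtype
  have hker : LinearMap.ker φ ≠ ⊥ :=
    LinearMap.ker_ne_bot_of_finrank_lt (by simpa [Module.finrank_fintype_fun_eq_card] using hs)
  obtain ⟨w, hwφ, hw0⟩ := Submodule.exists_mem_ne_zero_of_ne_bot hker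
  refine ⟨w, w.2, by simpa using hw0, fun j hj => ?_⟩
  simpa [φ] using congrFun hwφ ⟨j, hj⟩

/-- A weak form of the Courant–Fischer min-max principle. -/
theorem Matrix.IsHermitian.exists_ne_zero_forall_apply_eq_zero_and_le_re_dotProduct_mulVec
    {n : Type*} [Fintype n] [DecidableEq n] {A : Matrix n n 𝕜} (hA : A.IsHermitian)
    {x : ℝ} {P : Finset n} (hP : ∀ i ∈ P, x ≤ hA.eigenvalues i) {s : Finset n} (hs : #s < #P) :
    ∃ v : n → 𝕜, v ≠ 0 ∧ (∀ j ∈ s, v j = 0) ∧ x * ∑ i, ‖v i‖ ^ 2 ≤ re (star v ⬝ᵥ A *ᵥ v) := by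
  let b : P → EuclideanSpace 𝕜 n := fun i => hA.eigenvectorBasis i
  have hb : Orthonormal 𝕜 b := hA.eigenvectorBasis.orthonormal.comp _ Subtype.val_injective
  have hfin : Module.finrank 𝕜 (Submodule.span 𝕜 (Set.range b)) = #P := by
    rw [finrank_span_eq_card hb.linearIndependent, Fintype.card_coe]
  obtain ⟨w, hwS, hw0, hws⟩ :=
    EuclideanSpace.exists_mem_ne_zero_forall_apply_eq_zero _ s (hfin ▸ hs)
  refine ⟨w.ofLp, by simpa using hw0, hws, ?_⟩
  have hT : ∀ i, toLpLin 2 2 A (b i) = (hA.eigenvalues i : 𝕜) • b i := by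
    intro i
    ext j
    rw [toLpLin_apply]
    simp only [b, hA.mulVec_eigenvectorBasis, PiLp.smul_apply, Pi.smul_apply,
      RCLike.real_smul_eq_coe_smul (K := 𝕜)]
  have := hb.mul_norm_sq_le_re_inner_of_mem_span hT (fun i => hP i i.2) hwS
  rwa [EuclideanSpace.norm_sq_eq, EuclideanSpace.inner_eq_star_dotProduct, dotProduct_comm] at this

end Spectral

section QuadraticForm

variable {𝕜 ι : Type*} [RCLike 𝕜] [Fintype ι]

theorem two_mul_re_star_mul_mul_le {v : ι → 𝕜} {a b : ι} (hab : a ≠ b) (z : 𝕜) :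
    2 * re (star (v a) * z * v b) ≤ ‖z‖ * ∑ i, ‖v i‖ ^ 2 :=
  calc 2 * re (star (v a) * z * v b) ≤ 2 * (‖z‖ * (‖v a‖ * ‖v b‖)) := by
        gcongr
        refine (re_le_norm _).trans_eq ?_
        rw [norm_mul, norm_mul, norm_star]
        ring
    _ ≤ ‖z‖ * (‖v a‖ ^ 2 + ‖v b‖ ^ 2) := by
        nlinarith [two_mul_le_add_sq ‖v a‖ ‖v b‖, norm_nonneg z]
    _ ≤ ‖z‖ * ∑ i, ‖v i‖ ^ 2 := by
        gcongr
        exact add_le_sum (f := fun i => ‖v i‖ ^ 2) (fun _ _ => by positivity)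
          (mem_univ a) (mem_univ b) hab

variable [LinearOrder ι]

theorem Matrix.IsHermitian.re_star_dotProduct_mulVec_eq {A : Matrix ι ι 𝕜} (hA : A.IsHermitian)
    (v : ι → 𝕜) :
    re (star v ⬝ᵥ A *ᵥ v) = ∑ i, re (A i i) * ‖v i‖ ^ 2 +
      2 * ∑ p ∈ univ.filter (fun p : ι × ι => p.1 < p.2),
        re (star (v p.1) * A p.1 p.2 * v p.2) := by
  set g : ι × ι → ℝ := fun p => re (star (v p.1) * A p.1 p.2 * v p.2)
  have hsum : re (star v ⬝ᵥ A *ᵥ v) = ∑ p, g p := by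
    simp only [g, dotProduct, mulVec, mul_sum, map_sum, Fintype.sum_prod_type, Pi.star_apply,
      mul_assoc]
  have hsplit : ∀ p : ι × ι, g p = (if p.1 = p.2 then g p else 0) +
      ((if p.1 < p.2 then g p else 0) + if p.2 < p.1 then g p else 0) := fun p => by
    rcases lt_trichotomy p.1 p.2 with h | h | h
    · simp [h, h.ne, h.not_gt]
    · simp [h]
    · simp [h, h.ne', h.not_gt]
  have hdiag : ∀ i, g (i, i) = re (A i i) * ‖v i‖ ^ 2 := fun i => by
    simp only [g]
    rw [mul_comm (star _), mul_assoc, RCLike.star_def, RCLike.conj_mul, ← ofReal_pow,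
      re_mul_ofReal]
  have hswap : ∑ p ∈ univ.filter (fun p : ι × ι => p.2 < p.1), g p =
      ∑ p ∈ univ.filter (fun p : ι × ι => p.1 < p.2), g p := by
    refine sum_equiv (Equiv.prodComm ι ι) (by simp) fun p _ => ?_
    simp only [g, Equiv.prodComm_apply, Prod.fst_swap, Prod.snd_swap]
    rw [← conj_re (star (v p.2) * A p.2 p.1 * v p.1), ← hA.apply p.1 p.2]
    simp only [map_mul, RCLike.star_def, conj_conj]
    ring_nf
  rw [hsum, sum_congr rfl fun p _ => hsplit p, sum_add_distrib, sum_add_distrib, ← sum_filter,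
    ← sum_filter, ← sum_filter, hswap, Finset.sum_filter, Fintype.sum_prod_type]
  simp only [sum_ite_eq, mem_univ, if_true, hdiag]
  ring

theorem Matrix.IsHermitian.re_star_dotProduct_mulVec_le {A : Matrix ι ι 𝕜} (hA : A.IsHermitian)
    {v : ι → 𝕜} {m : ι} (hv : ∀ j < m, v j = 0)
    (hdiag : ∀ j, m ≤ j → re (A j j) ≤ re (A m m)) :
    re (star v ⬝ᵥ A *ᵥ v) ≤ (re (A m m) +
      ∑ p ∈ univ.filter (fun p : ι × ι => m ≤ p.1 ∧ p.1 < p.2), ‖A p.1 p.2‖) *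
        ∑ i, ‖v i‖ ^ 2 := by
  rw [hA.re_star_dotProduct_mulVec_eq, add_mul]
  refine add_le_add ?_ ?_
  · rw [mul_sum]
    refine sum_le_sum fun i _ => ?_
    by_cases hi : i < m
    · simp [hv i hi]
    · exact mul_le_mul_of_nonneg_right (hdiag i (not_lt.1 hi)) (by positivity)
  · have hfilter : univ.filter (fun p : ι × ι => m ≤ p.1 ∧ p.1 < p.2) =
        (univ.filter fun p : ι × ι => p.1 < p.2).filter fun p => m ≤ p.1 := by
      ext; simp [and_comm]
    rw [hfilter, sum_filter (fun p : ι × ι => m ≤ p.1), sum_mul, mul_sum]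
    refine sum_le_sum fun p hp => ?_
    split_ifs with h
    · exact two_mul_re_star_mul_mul_le (mem_filter.1 hp).2.ne _
    · simp [hv _ (not_le.1 h)]

theorem Matrix.IsHermitian.le_re_add_sum_norm_of_card_Iio_lt [DecidableEq ι]
    [LocallyFiniteOrderBot ι] {A : Matrix ι ι 𝕜} (hA : A.IsHermitian) {x : ℝ} {P : Finset ι}
    (hP : ∀ i ∈ P, x ≤ hA.eigenvalues i) {m : ι} (hm : #(Iio m) < #P)
    (hdiag : ∀ j, m ≤ j → re (A j j) ≤ re (A m m)) :
    x ≤ re (A m m) + ∑ p ∈ univ.filter (fun p : ι × ι => m ≤ p.1 ∧ p.1 < p.2), ‖A p.1 p.2‖ := by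
  obtain ⟨v, hv0, hvanish, hlow⟩ :=
    hA.exists_ne_zero_forall_apply_eq_zero_and_le_re_dotProduct_mulVec hP hm
  have hup := hA.re_star_dotProduct_mulVec_le (fun j hj => hvanish j (mem_Iio.2 hj)) hdiag
  have hvpos : 0 < ∑ i, ‖v i‖ ^ 2 := by
    obtain ⟨i, hi⟩ := Function.ne_iff.1 hv0
    exact (pow_pos (norm_pos_iff.2 hi) 2).trans_le
      (single_le_sum (f := fun j => ‖v j‖ ^ 2) (fun j _ => by positivity) (mem_univ i))
  exact le_of_mul_le_mul_right (hlow.trans hup) hvpos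

end QuadraticForm

theorem Real.le_rpow_mul_rpow_of_le_mul_rpow_neg {n ρ x γ : ℝ} (hn : 0 < n) (hx : 0 < x)
    (hγ : 0 < γ) (h : x ≤ ρ * n ^ (-γ)) : n ≤ ρ ^ (1 / γ) * x ^ (-1 / γ) := by
  have hnγ : 0 < n ^ γ := Real.rpow_pos_of_pos hn γ
  have hρ : 0 < ρ := pos_of_mul_pos_left (hx.trans_le h) (Real.rpow_nonneg hn.le _)
  have hle : n ^ γ ≤ ρ / x := by
    rw [Real.rpow_neg hn.le, ← div_eq_mul_inv, le_div_iff₀ hnγ] at h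
    rw [le_div_iff₀ hx]
    linarith
  calc n = (n ^ γ) ^ (1 / γ) := by
        rw [← Real.rpow_mul hn.le, mul_one_div_cancel hγ.ne', Real.rpow_one]
    _ ≤ (ρ / x) ^ (1 / γ) := by gcongr
    _ = ρ ^ (1 / γ) * x ^ (-1 / γ) := by
        rw [Real.div_rpow hρ.le hx.le, neg_div, Real.rpow_neg hx.le, div_eq_mul_inv]

theorem capacity_counting_bound_general {M : ℕ}
    (F : Matrix (Fin M) (Fin M) ℂ) (hF : F.PosSemidef)
    (α fplus γ : ℝ) (hα : 0 < α) (hfplus : 0 < fplus) (hγ : 1 < γ)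
    (hmono : ∀ i j : Fin M, i ≤ j → (F j j).re ≤ (F i i).re)
    (hA1 : ∀ i : Fin M,
      ∑ p ∈ Finset.univ.filter (fun p : Fin M × Fin M => i ≤ p.1 ∧ p.1 < p.2),
        ‖F p.1 p.2‖ ≤ α * (F i i).re)
    (hA2 : ∀ i : Fin M, (F i i).re ≤ fplus * ((i : ℝ) + 1) ^ (-γ))
    (x : ℝ) (hx : 0 < x) :
    (((Finset.univ.filter (fun i => x < hF.1.eigenvalues i)).card : ℝ))
      ≤ min (M : ℝ) (((1 + α) * fplus) ^ (1/γ) * x ^ (-1/γ)) := by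
  set P := univ.filter fun i => x < hF.1.eigenvalues i
  have hPM : #P ≤ M := (card_filter_le _ _).trans_eq (card_fin M)
  refine le_min (mod_cast hPM) ?_
  rcases eq_or_ne #P 0 with hP | hP
  · rw [hP, Nat.cast_zero]
    positivity
  obtain ⟨m, hm⟩ := Nat.exists_eq_add_one_of_ne_zero hP
  have hmM : m < M := by omega
  set i₀ : Fin M := ⟨m, hmM⟩
  have hx₀ : x ≤ (1 + α) * (F i₀ i₀).re := by
    have := hF.1.le_re_add_sum_norm_of_card_Iio_lt (P := P) (m := i₀)
      (fun i hi => (mem_filter.1 hi).2.le) (by simp [i₀, hm]) (hmono i₀)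
    rw [RCLike.re_to_complex] at this
    linarith [hA1 i₀]
  refine Real.le_rpow_mul_rpow_of_le_mul_rpow_neg (by positivity) hx (by linarith) ?_
  calc x ≤ (1 + α) * (F i₀ i₀).re := hx₀
    _ ≤ (1 + α) * (fplus * ((i₀ : ℝ) + 1) ^ (-γ)) := by gcongr; exact hA2 i₀
    _ = (1 + α) * fplus * (#P : ℝ) ^ (-γ) := by rw [hm]; push_cast [i₀]; ring

/-- Under (A1)-(A2) with decreasing nonnegative diagonal, the eigenvalue
counting function of the Hermitian PSD matrix `F` satisfies
`N(x;F) ≤ min (M, ρ₊^{1/γ} x^{-1/γ})` for all `x > 0`, where `ρ₊ = (1+α) f₊`. -/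
theorem capacity_counting_bound {M : ℕ} (hM : 1 ≤ M)
    (F : Matrix (Fin M) (Fin M) ℂ) (hF : F.PosSemidef)
    (α fplus γ : ℝ) (hα : 0 < α) (hfplus : 0 < fplus) (hγ : 1 < γ)
    (hmono : ∀ i j : Fin M, i ≤ j → (F j j).re ≤ (F i i).re)
    (hnonneg : ∀ i : Fin M, 0 ≤ (F i i).re)
    (hA1 : ∀ i : Fin M,
      ∑ p ∈ Finset.univ.filter (fun p : Fin M × Fin M => i ≤ p.1 ∧ p.1 < p.2),
        ‖F p.1 p.2‖ ≤ α * (F i i).re)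
    (hA2 : ∀ i : Fin M, (F i i).re ≤ fplus * ((i : ℝ) + 1) ^ (-γ))
    (x : ℝ) (hx : 0 < x) :
    (((Finset.univ.filter (fun i => x < hF.1.eigenvalues i)).card : ℝ))
      ≤ min (M : ℝ) (((1 + α) * fplus) ^ (1/γ) * x ^ (-1/γ)) :=
  capacity_counting_bound_general F hF α fplus γ hα hfplus hγ hmono hA1 hA2 x hx
end

section
/- Let M ≥ 1 and let F be an M×M Hermitian positive semidefinite complex matrix whose diagonal entries f_i := F_{i,i} satisfy f_1 ≥ f_2 ≥ … ≥ f_M ≥ 0, assumption (A1) with constant α > 0, and assumption (A2) with constants f_+ > 0 and γ > 1. Set ρ_+ := (1+α) f_+ and let κ > 0. If λ_1, …, λ_M are the eigenvalues of F, then the capacity C_M := Σ_{i=1}^M log₂(1 + κ M λ_i) satisfies C_M ≤ ((κ ρ_+)^{1/γ} / ln 2) · M^{1/γ} · ( γ/(γ−1) + ln(1 + κ ρ_+ M) ). -/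
open scoped ComplexOrder

/-!
By Gershgorin's theorem, (A1) and (A2), every eigenvalue is at most `ρ₊`. Put
`t = (κ ρ₊ M)^{1/γ}` and `N = ⌊t⌋`. Ky Fan's principle gives `M - N` eigenvalues whose sum is at
most the sum of the last `M - N` diagonal entries, which by (A2) and comparison with `∫ x^{-γ}` is
at most `f₊ ((N+1)^{-γ} + (N+1)^{1-γ} / (γ - 1))`; since `ln (1 + y) ≤ y`, these eigenvalues
contribute at most `t γ / (γ - 1)`. Each of the remaining `N ≤ t` eigenvalues contributes at most
`ln (1 + κ ρ₊ M)`.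
-/

theorem Finset.exists_card_eq_forall_le_forall_ge {ι α : Type*} [Fintype ι]
    [ConditionallyCompleteLinearOrder α] [Nonempty α] (f : ι → α) {K : ℕ}
    (hK : K ≤ Fintype.card ι) :
    ∃ (B : Finset ι) (c : α), B.card = K ∧ (∀ i ∈ B, f i ≤ c) ∧ ∀ i ∉ B, c ≤ f i := by
  classical
  induction K with
  | zero => exact ⟨∅, ⨅ i, f i, rfl, by simp, fun i _ => ciInf_le (Set.finite_range f).bddBelow i⟩
  | succ K ih =>
    obtain ⟨B, c, hcard, hle, hge⟩ := ih (by omega)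
    have hne : Bᶜ.Nonempty := by
      rw [← Finset.card_pos, Finset.card_compl]; omega
    obtain ⟨j, hj, hmin⟩ := Bᶜ.exists_min_image f hne
    rw [Finset.mem_compl] at hj
    refine ⟨insert j B, f j, by rw [Finset.card_insert_of_notMem hj, hcard], ?_, ?_⟩
    · simp only [Finset.mem_insert, forall_eq_or_imp, le_refl, true_and]
      exact fun i hi => (hle i hi).trans (hge j hj)
    · intro i hi
      simp only [Finset.mem_insert, not_or] at hi
      exact hmin i (Finset.mem_compl.2 hi.2)

theorem Finset.sum_le_sum_mul_of_forall_le_of_forall_ge {ι : Type*} [Fintype ι]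
    {f w : ι → ℝ} {B : Finset ι} {c : ℝ} (hB : ∀ i ∈ B, f i ≤ c) (hBc : ∀ i ∉ B, c ≤ f i)
    (hw0 : ∀ i, 0 ≤ w i) (hw1 : ∀ i, w i ≤ 1) (hw : ∑ i, w i = B.card) :
    ∑ i ∈ B, f i ≤ ∑ i, f i * w i := by
  classical
  -- every term is a product of two factors of the same sign
  have key : 0 ≤ ∑ i, (f i - c) * (w i - if i ∈ B then 1 else 0) := by
    refine Finset.sum_nonneg fun i _ => ?_
    split_ifs with hi
    · exact mul_nonneg_of_nonpos_of_nonpos (by linarith [hB i hi]) (by linarith [hw1 i])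
    · exact mul_nonneg (by linarith [hBc i hi]) (by linarith [hw0 i])
  have expand : ∑ i, (f i - c) * (w i - if i ∈ B then 1 else 0)
      = ∑ i, f i * w i - ∑ i ∈ B, f i - c * (∑ i, w i - B.card) := by
    simp only [sub_mul, mul_sub, Finset.sum_sub_distrib, mul_ite, mul_one, mul_zero,
      Finset.sum_ite_mem, Finset.univ_inter, ← Finset.mul_sum, Finset.sum_const, nsmul_eq_mul]
    ring
  rw [expand, hw, sub_self, mul_zero, sub_zero] at key
  linarith

namespace Matrix.IsHermitian

variable {𝕜 : Type*} [RCLike 𝕜] {n : Type*} [Fintype n] [DecidableEq n] {A : Matrix n n 𝕜}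

theorem exists_eigenvalues_le_re_add_sum_norm (hA : A.IsHermitian) (i : n) :
    ∃ k, hA.eigenvalues i ≤ RCLike.re (A k k) + ∑ j ∈ Finset.univ.erase k, ‖A k j‖ := by
  have hmem : (hA.eigenvalues i : 𝕜) ∈ spectrum 𝕜 A := by
    rw [hA.spectrum_eq_image_range]; exact ⟨_, ⟨i, rfl⟩, rfl⟩
  obtain ⟨k, hk⟩ := eigenvalue_mem_ball (A := A)
    (Module.End.hasEigenvalue_iff_mem_spectrum.2 (by rwa [spectrum_toLin']))
  refine ⟨k, ?_⟩
  rw [Metric.mem_closedBall, dist_eq_norm] at hk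
  have := (RCLike.re_le_norm _).trans hk
  rw [map_sub, RCLike.ofReal_re] at this
  linarith

theorem sum_norm_erase_le_sum_norm_lt [LinearOrder n] (hA : A.IsHermitian) (k : n) :
    ∑ j ∈ Finset.univ.erase k, ‖A k j‖
      ≤ ∑ p ∈ Finset.univ.filter (fun p : n × n => p.1 < p.2), ‖A p.1 p.2‖ := by
  set e : n → n × n := fun j => if j < k then (j, k) else (k, j)
  have he : Set.InjOn e (Finset.univ.erase k) := by
    intro a ha b hb hab
    simp only [e] at hab
    split_ifs at hab <;> simp_all [Prod.ext_iff]
  calc ∑ j ∈ Finset.univ.erase k, ‖A k j‖ = ∑ p ∈ (Finset.univ.erase k).image e, ‖A p.1 p.2‖ := by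
        rw [Finset.sum_image he]
        refine Finset.sum_congr rfl fun j _ => ?_
        simp only [e]
        split_ifs
        · rw [← hA.apply j k, norm_star]
        · rfl
    _ ≤ _ := by
        refine Finset.sum_le_sum_of_subset_of_nonneg ?_ fun _ _ _ => norm_nonneg _
        intro p hp
        obtain ⟨j, hj, rfl⟩ := Finset.mem_image.1 hp
        simp only [e, Finset.mem_filter, Finset.mem_univ, true_and]
        split_ifs with h
        · exact h
        · exact lt_of_le_of_ne (not_lt.1 h) (Finset.ne_of_mem_erase hj).symm

theorem re_apply_self_eq_sum_eigenvalues_mul (hA : A.IsHermitian) (j : n) :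
    RCLike.re (A j j) = ∑ i, hA.eigenvalues i * ‖hA.eigenvectorBasis i j‖ ^ 2 := by
  conv_lhs => rw [hA.spectral_theorem, Unitary.conjStarAlgAut_apply, mul_apply]
  simp only [mul_diagonal, star_apply, eigenvectorUnitary_apply, Function.comp_apply,
    RCLike.star_def, mul_right_comm _ (RCLike.ofReal _), RCLike.mul_conj, map_sum]
  norm_cast
  simp [mul_comm]

theorem sum_sq_norm_eigenvectorBasis_apply_right (hA : A.IsHermitian) (i : n) :
    ∑ j, ‖hA.eigenvectorBasis i j‖ ^ 2 = 1 := by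
  rw [← EuclideanSpace.norm_sq_eq, hA.eigenvectorBasis.orthonormal.1 i, one_pow]

theorem sum_sq_norm_eigenvectorBasis_apply_left (hA : A.IsHermitian) (j : n) :
    ∑ i, ‖hA.eigenvectorBasis i j‖ ^ 2 = 1 := by
  simpa [EuclideanSpace.inner_single_right] using
    hA.eigenvectorBasis.sum_sq_norm_inner_right (EuclideanSpace.single j 1)

/-- A weak form of Ky Fan's minimum principle. -/
theorem exists_card_eq_sum_eigenvalues_le (hA : A.IsHermitian) (J : Finset n) :
    ∃ B : Finset n, B.card = J.card ∧ ∑ i ∈ B, hA.eigenvalues i ≤ ∑ j ∈ J, RCLike.re (A j j) := by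
  obtain ⟨B, c, hcard, hle, hge⟩ :=
    Finset.exists_card_eq_forall_le_forall_ge hA.eigenvalues (Finset.card_le_univ J)
  -- `∑ j ∈ J, A j j` is the combination of the eigenvalues with these weights
  set w : n → ℝ := fun i => ∑ j ∈ J, ‖hA.eigenvectorBasis i j‖ ^ 2
  have hw0 : ∀ i, 0 ≤ w i := fun i => by positivity
  have hw1 : ∀ i, w i ≤ 1 := fun i =>
    (Finset.sum_le_univ_sum_of_nonneg fun _ => by positivity).trans_eq
      (hA.sum_sq_norm_eigenvectorBasis_apply_right i)
  have hw : ∑ i, w i = B.card := by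
    rw [Finset.sum_comm, hcard, Finset.card_eq_sum_ones, Nat.cast_sum]
    exact Finset.sum_congr rfl fun j _ => by
      rw [hA.sum_sq_norm_eigenvectorBasis_apply_left, Nat.cast_one]
  refine ⟨B, hcard, ?_⟩
  calc ∑ i ∈ B, hA.eigenvalues i ≤ ∑ i, hA.eigenvalues i * w i :=
        Finset.sum_le_sum_mul_of_forall_le_of_forall_ge hle hge hw0 hw1 hw
    _ = ∑ j ∈ J, RCLike.re (A j j) := by
        simp only [w, Finset.mul_sum, hA.re_apply_self_eq_sum_eigenvalues_mul]
        exact Finset.sum_comm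

end Matrix.IsHermitian

theorem Finset.sum_attachFin {β : Type*} [AddCommMonoid β] {M : ℕ} (s : Finset ℕ)
    (h : ∀ m ∈ s, m < M) (g : ℕ → β) : ∑ j ∈ s.attachFin h, g j = ∑ m ∈ s, g m := by
  conv_rhs => rw [← Finset.map_valEmbedding_attachFin h, Finset.sum_map]
  rfl

theorem Real.sum_Ico_add_one_rpow_neg_le {γ : ℝ} (hγ : 1 < γ) (N M : ℕ) :
    ∑ m ∈ Finset.Ico N M, ((m : ℝ) + 1) ^ (-γ)
      ≤ ((N : ℝ) + 1) ^ (-γ) + ((N : ℝ) + 1) ^ (1 - γ) / (γ - 1) := by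
  have hγ1 : 0 < γ - 1 := sub_pos.2 hγ
  rcases le_or_gt M N with hMN | hNM
  · rw [Finset.Ico_eq_empty_of_le hMN, Finset.sum_empty]
    positivity
  have hpos : ∀ x ∈ Set.Icc ((N + 1 : ℕ) : ℝ) M, 0 < x := fun x hx =>
    lt_of_lt_of_le (by positivity) hx.1
  have hanti : AntitoneOn (fun x : ℝ => x ^ (-γ)) (Set.Icc ((N + 1 : ℕ) : ℝ) M) :=
    fun x hx y _ hxy => Real.rpow_le_rpow_of_nonpos (hpos x hx) hxy (by linarith)
  have hint : ∫ x in ((N + 1 : ℕ) : ℝ)..M, x ^ (-γ) ≤ ((N : ℝ) + 1) ^ (1 - γ) / (γ - 1) := by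
    have h0 : (0 : ℝ) ∉ Set.uIcc ((N + 1 : ℕ) : ℝ) M := fun h0 =>
      (hpos 0 (by rwa [Set.uIcc_of_le (by exact_mod_cast hNM)] at h0)).false
    rw [integral_rpow (Or.inr ⟨by linarith, h0⟩), show -γ + 1 = 1 - γ by ring,
      ← neg_div_neg_eq, neg_sub, neg_sub, Nat.cast_succ]
    gcongr
    exact sub_le_self _ (by positivity)
  calc ∑ m ∈ Finset.Ico N M, ((m : ℝ) + 1) ^ (-γ)
      = ((N : ℝ) + 1) ^ (-γ) + ∑ m ∈ Finset.Ico (N + 1) M, (((m + 1 : ℕ) : ℝ)) ^ (-γ) := by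
        rw [Finset.sum_eq_sum_Ico_succ_bot hNM]; push_cast; rfl
    _ ≤ _ := by
        gcongr
        exact (hanti.sum_le_integral_Ico hNM).trans hint

theorem Real.rpow_mul_rpow_one_sub_le {t A γ : ℝ} (ht : 0 ≤ t) (htA : t ≤ A) (hγ : 1 ≤ γ) :
    t ^ γ * A ^ (1 - γ) ≤ t := by
  rcases ht.eq_or_lt with rfl | htpos
  · rw [Real.zero_rpow (by linarith), zero_mul]
  have hApos : 0 < A := htpos.trans_le htA
  calc t ^ γ * A ^ (1 - γ) = t * (t ^ (γ - 1) / A ^ (γ - 1)) := by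
        rw [show 1 - γ = -(γ - 1) by ring, Real.rpow_neg hApos.le, ← mul_div_assoc, div_eq_mul_inv,
          ← Real.rpow_one_add' ht (by linarith), add_sub_cancel]
    _ ≤ t * 1 := by
        gcongr
        exact div_le_one_of_le₀ (Real.rpow_le_rpow ht htA (by linarith)) (by positivity)
    _ = t := mul_one t

theorem Real.rpow_mul_add_rpow_div_le {t A γ : ℝ} (ht : 0 ≤ t) (htA : t ≤ A) (hA : 1 ≤ A)
    (hγ : 1 < γ) : t ^ γ * (A ^ (-γ) + A ^ (1 - γ) / (γ - 1)) ≤ t * (γ / (γ - 1)) := by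
  have hγ1 : 0 < γ - 1 := sub_pos.2 hγ
  have hexp : A ^ (-γ) ≤ A ^ (1 - γ) := Real.rpow_le_rpow_of_exponent_le hA (by linarith)
  calc t ^ γ * (A ^ (-γ) + A ^ (1 - γ) / (γ - 1))
      ≤ t ^ γ * (A ^ (1 - γ) + A ^ (1 - γ) / (γ - 1)) := by gcongr
    _ = t ^ γ * A ^ (1 - γ) * (γ / (γ - 1)) := by field_simp; ring
    _ ≤ t * (γ / (γ - 1)) := by gcongr; exact Real.rpow_mul_rpow_one_sub_le ht htA hγ.le

theorem Matrix.PosSemidef.sum_log_one_add_mul_eigenvalues_le {𝕜 : Type*} [RCLike 𝕜] {M : ℕ}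
    {A : Matrix (Fin M) (Fin M) 𝕜} (hA : A.PosSemidef) {x ρ f γ : ℝ} (hx : 0 ≤ x) (hρ : 0 ≤ ρ)
    (hγ : 1 < γ) (hfρ : f ≤ ρ) (heig : ∀ i, hA.1.eigenvalues i ≤ ρ)
    (hdiag : ∀ j : Fin M, RCLike.re (A j j) ≤ f * ((j : ℝ) + 1) ^ (-γ)) :
    ∑ i, Real.log (1 + x * hA.1.eigenvalues i)
      ≤ (x * ρ) ^ (1 / γ) * (γ / (γ - 1) + Real.log (1 + x * ρ)) := by
  have htγ : ((x * ρ) ^ (1 / γ)) ^ γ = x * ρ := by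
    rw [one_div, Real.rpow_inv_rpow (mul_nonneg hx hρ) (by linarith)]
  set t := (x * ρ) ^ (1 / γ)
  have ht : 0 ≤ t := by positivity
  set N := ⌊t⌋₊
  set J := (Finset.Ico N M).attachFin fun m hm => (Finset.mem_Ico.1 hm).2
  obtain ⟨B, hBcard, hBsum⟩ := hA.1.exists_card_eq_sum_eigenvalues_le J
  have hB : ∑ i ∈ B, Real.log (1 + x * hA.1.eigenvalues i) ≤ t * (γ / (γ - 1)) := calc
    ∑ i ∈ B, Real.log (1 + x * hA.1.eigenvalues i) ≤ ∑ i ∈ B, x * hA.1.eigenvalues i :=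
        Finset.sum_le_sum fun i _ => (Real.log_le_sub_one_of_pos (by
          have := hA.eigenvalues_nonneg i; positivity)).trans_eq (by ring)
    _ = x * ∑ i ∈ B, hA.1.eigenvalues i := (Finset.mul_sum _ _ _).symm
    _ ≤ x * ∑ j ∈ J, RCLike.re (A j j) := by gcongr
    _ ≤ x * ∑ j ∈ J, f * ((j : ℝ) + 1) ^ (-γ) := by gcongr with j; exact hdiag j
    _ = x * (f * ∑ m ∈ Finset.Ico N M, ((m : ℝ) + 1) ^ (-γ)) := by
        rw [← Finset.mul_sum, Finset.sum_attachFin _ _ fun m => ((m : ℝ) + 1) ^ (-γ)]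
    _ ≤ x * (ρ * (((N : ℝ) + 1) ^ (-γ) + ((N : ℝ) + 1) ^ (1 - γ) / (γ - 1))) := by
        gcongr
        exact Real.sum_Ico_add_one_rpow_neg_le hγ N M
    _ = t ^ γ * (((N : ℝ) + 1) ^ (-γ) + ((N : ℝ) + 1) ^ (1 - γ) / (γ - 1)) := by
        rw [htγ, mul_assoc]
    _ ≤ t * (γ / (γ - 1)) :=
        Real.rpow_mul_add_rpow_div_le ht (Nat.lt_floor_add_one t).le (by simp) hγ
  have hBc : ∑ i ∈ Bᶜ, Real.log (1 + x * hA.1.eigenvalues i) ≤ t * Real.log (1 + x * ρ) := calc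
    ∑ i ∈ Bᶜ, Real.log (1 + x * hA.1.eigenvalues i) ≤ ∑ i ∈ Bᶜ, Real.log (1 + x * ρ) :=
        Finset.sum_le_sum fun i _ => Real.log_le_log
          (by have := hA.eigenvalues_nonneg i; positivity) (by gcongr; exact heig i)
    _ = Bᶜ.card * Real.log (1 + x * ρ) := by rw [Finset.sum_const, nsmul_eq_mul]
    _ ≤ t * Real.log (1 + x * ρ) := by
        have hcard : Bᶜ.card ≤ N := by
          rw [Finset.card_compl, hBcard, Finset.card_attachFin, Nat.card_Ico, Fintype.card_fin]
          omega
        gcongr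
        · exact Real.log_nonneg (by nlinarith)
        · exact (Nat.cast_le.2 hcard).trans (Nat.floor_le ht)
  calc ∑ i, Real.log (1 + x * hA.1.eigenvalues i)
      = ∑ i ∈ B, Real.log (1 + x * hA.1.eigenvalues i)
        + ∑ i ∈ Bᶜ, Real.log (1 + x * hA.1.eigenvalues i) := (Finset.sum_add_sum_compl B _).symm
    _ ≤ t * (γ / (γ - 1)) + t * Real.log (1 + x * ρ) := add_le_add hB hBc
    _ = t * (γ / (γ - 1) + Real.log (1 + x * ρ)) := by ring

theorem capacity_sublinear_bound_general {M : ℕ}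
    (F : Matrix (Fin M) (Fin M) ℂ) (hF : F.PosSemidef)
    (α fplus γ κ : ℝ) (hα : 0 < α) (hfplus : 0 < fplus) (hγ : 1 < γ) (hκ : 0 < κ)
    (hA1 : ∀ i : Fin M,
      ∑ p ∈ Finset.univ.filter (fun p : Fin M × Fin M => i ≤ p.1 ∧ p.1 < p.2),
        ‖F p.1 p.2‖ ≤ α * (F i i).re)
    (hA2 : ∀ i : Fin M, (F i i).re ≤ fplus * ((i : ℝ) + 1) ^ (-γ)) :
    ∑ i, Real.logb 2 (1 + κ * M * hF.1.eigenvalues i)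
      ≤ (κ * ((1 + α) * fplus)) ^ (1/γ) / Real.log 2 * (M : ℝ) ^ (1/γ)
          * (γ / (γ - 1) + Real.log (1 + κ * ((1 + α) * fplus) * M)) := by
  have hdiag : ∀ k : Fin M, (F k k).re ≤ fplus := fun k =>
    (hA2 k).trans (mul_le_of_le_one_right hfplus.le
      (Real.rpow_le_one_of_one_le_of_nonpos (by simp) (by linarith)))
  have heig : ∀ i, hF.1.eigenvalues i ≤ (1 + α) * fplus := by
    intro i
    obtain ⟨k, hk⟩ := hF.1.exists_eigenvalues_le_re_add_sum_norm i
    have hupper := hA1 ⟨0, k.pos⟩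
    simp only [Fin.le_iff_val_le_val, Nat.zero_le, true_and] at hupper
    have hrow := (hF.1.sum_norm_erase_le_sum_norm_lt k).trans
      (hupper.trans (mul_le_mul_of_nonneg_left (hdiag _) hα.le))
    have := hdiag k
    change hF.1.eigenvalues i ≤ (F k k).re + _ at hk
    linarith
  have hcap := hF.sum_log_one_add_mul_eigenvalues_le (x := κ * M) (by positivity) (by positivity)
    hγ (le_mul_of_one_le_left hfplus.le (by linarith)) heig hA2
  calc ∑ i, Real.logb 2 (1 + κ * M * hF.1.eigenvalues i)
      = (∑ i, Real.log (1 + κ * M * hF.1.eigenvalues i)) / Real.log 2 := by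
        simp_rw [Real.logb, Finset.sum_div]
    _ ≤ (κ * M * ((1 + α) * fplus)) ^ (1 / γ)
          * (γ / (γ - 1) + Real.log (1 + κ * M * ((1 + α) * fplus))) / Real.log 2 :=
        div_le_div_of_nonneg_right hcap (Real.log_nonneg one_le_two)
    _ = _ := by
        rw [mul_right_comm κ, Real.mul_rpow (by positivity) (by positivity)]
        ring

/-- Under (A1)-(A2), the Foschini-Gans capacity
`C_M = ∑ᵢ log₂(1 + κ M λᵢ)` of the system with fading matrix `F` is bounded by
`((κ ρ₊)^{1/γ} / ln 2) M^{1/γ} (γ/(γ-1) + ln(1 + κ ρ₊ M))`, with `ρ₊ = (1+α) f₊`. -/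
theorem capacity_sublinear_bound {M : ℕ} (hM : 1 ≤ M)
    (F : Matrix (Fin M) (Fin M) ℂ) (hF : F.PosSemidef)
    (α fplus γ κ : ℝ) (hα : 0 < α) (hfplus : 0 < fplus) (hγ : 1 < γ) (hκ : 0 < κ)
    (hmono : ∀ i j : Fin M, i ≤ j → (F j j).re ≤ (F i i).re)
    (hnonneg : ∀ i : Fin M, 0 ≤ (F i i).re)
    (hA1 : ∀ i : Fin M,
      ∑ p ∈ Finset.univ.filter (fun p : Fin M × Fin M => i ≤ p.1 ∧ p.1 < p.2),
        ‖F p.1 p.2‖ ≤ α * (F i i).re)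
    (hA2 : ∀ i : Fin M, (F i i).re ≤ fplus * ((i : ℝ) + 1) ^ (-γ)) :
    ∑ i, Real.logb 2 (1 + κ * M * hF.1.eigenvalues i)
      ≤ (κ * ((1 + α) * fplus)) ^ (1/γ) / Real.log 2 * (M : ℝ) ^ (1/γ)
          * (γ / (γ - 1) + Real.log (1 + κ * ((1 + α) * fplus) * M)) :=
  capacity_sublinear_bound_general F hF α fplus γ κ hα hfplus hγ hκ hA1 hA2
end

section
/- Let M ≥ 1 and let F be an M×M Hermitian complex matrix whose diagonal entries f_i := F_{i,i} satisfy f_1 ≥ f_2 ≥ … ≥ f_M ≥ 0 and assumption (A1) with constant α > 0. Then for every x ≥ 0, N(x;F) ≤ N((1+α)^{−1} x; F_D), where F_D is the diagonal part of F; that is, the number of eigenvalues of F strictly greater than x is at most the number of diagonal entries of F strictly greater than x/(1+α). -/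
/-!
Min–max argument. Let `T` be the set of indices with `f_i > x/(1+α)`. If more than `#T`
eigenvalues of `F` exceeded `x`, the span of their eigenvectors would contain a nonzero `v`
vanishing on `T`, and `⟪v, F v⟫ > x‖v‖²`. But if `i` is the first index with `v_i ≠ 0`, then
`i ∉ T`; bounding each off-diagonal pair by `2|F_jk||v_j||v_k| ≤ |F_jk| ‖v‖²`, the monotonicity of
the diagonal and (A1) at `i` give `⟪v, F v⟫ ≤ (1+α) f_i ‖v‖² ≤ x‖v‖²`.
-/

open Finset Matrix
open scoped InnerProductSpace

theorem Fintype.sum_prod_eq_sum_diag_add_sum_lt {ι M : Type*} [Fintype ι] [LinearOrder ι]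
    [AddCommMonoid M] (f : ι × ι → M) :
    ∑ p, f p = ∑ i, f (i, i) + ∑ p : ι × ι with p.1 < p.2, (f p + f p.swap) := by
  have htri : ∀ p : ι × ι, f p = (if p.1 = p.2 then f p else 0) +
      ((if p.1 < p.2 then f p else 0) + if p.2 < p.1 then f p else 0) := by
    rintro ⟨i, j⟩
    rcases lt_trichotomy i j with h | rfl | h
    · simp [h, h.ne, h.not_gt]
    · simp
    · simp [h, h.ne', h.not_gt]
  have hswap : ∑ p : ι × ι, (if p.2 < p.1 then f p else 0) =
      ∑ p : ι × ι, if p.1 < p.2 then f p.swap else 0 :=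
    Fintype.sum_equiv (Equiv.prodComm ι ι) _ _ fun p => by simp
  rw [Finset.sum_congr rfl fun p _ => htri p, sum_add_distrib, sum_add_distrib, hswap,
    ← sum_add_distrib, sum_filter]
  congr 1
  · simp [Fintype.sum_prod_type]
  · exact Finset.sum_congr rfl fun p _ => by split_ifs <;> simp

theorem exists_ne_zero_and_forall_lt_eq_zero {ι M : Type*} [LinearOrder ι] [WellFoundedLT ι]
    [Zero M] {f : ι → M} (hf : f ≠ 0) : ∃ i, f i ≠ 0 ∧ ∀ j < i, f j = 0 := by
  obtain ⟨i, hi, hmin⟩ := wellFounded_lt.has_min {j | f j ≠ 0} (Function.ne_iff.mp hf)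
  exact ⟨i, hi, fun j hj => by_contra fun h => hmin j h hj⟩

namespace Matrix.IsHermitian

variable {𝕜 n : Type*} [RCLike 𝕜] [Fintype n] {A : Matrix n n 𝕜}

section Spectral

variable [DecidableEq n]

lemma toEuclideanLin_eigenvectorBasis (hA : A.IsHermitian) (i : n) :
    A.toEuclideanLin (hA.eigenvectorBasis i) =
      (hA.eigenvalues i : 𝕜) • hA.eigenvectorBasis i := by
  ext j
  rw [PiLp.smul_apply, ← RCLike.real_smul_eq_coe_smul, ← Pi.smul_apply,
    ← hA.mulVec_eigenvectorBasis]
  rfl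

lemma re_inner_toEuclideanLin_self (hA : A.IsHermitian) (v : EuclideanSpace 𝕜 n) :
    RCLike.re ⟪v, A.toEuclideanLin v⟫_𝕜 =
      ∑ i, hA.eigenvalues i * ‖⟪hA.eigenvectorBasis i, v⟫_𝕜‖ ^ 2 := by
  rw [← hA.eigenvectorBasis.sum_inner_mul_inner, map_sum]
  refine Finset.sum_congr rfl fun i _ => ?_
  rw [← (isSymmetric_toEuclideanLin_iff.mpr hA) _ v, toEuclideanLin_eigenvectorBasis,
    inner_smul_left, RCLike.conj_ofReal, ← inner_conj_symm v, mul_left_comm, RCLike.conj_mul]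
  norm_cast

lemma mul_norm_sq_lt_re_inner_toEuclideanLin_self (hA : A.IsHermitian) {x : ℝ}
    {v : EuclideanSpace 𝕜 n} (hv : v ≠ 0)
    (hsupp : ∀ i, ⟪hA.eigenvectorBasis i, v⟫_𝕜 ≠ 0 → x < hA.eigenvalues i) :
    x * ‖v‖ ^ 2 < RCLike.re ⟪v, A.toEuclideanLin v⟫_𝕜 := by
  obtain ⟨i₀, hi₀⟩ : ∃ i, ⟪hA.eigenvectorBasis i, v⟫_𝕜 ≠ 0 := by
    by_contra! h
    exact hv (hA.eigenvectorBasis.toBasis.ext_elem fun i => by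
      simpa [hA.eigenvectorBasis.repr_apply_apply] using h i)
  rw [hA.re_inner_toEuclideanLin_self, ← hA.eigenvectorBasis.sum_sq_norm_inner_right,
    Finset.mul_sum]
  refine Finset.sum_lt_sum (fun i _ => ?_) ⟨i₀, Finset.mem_univ _, ?_⟩
  · by_cases hi : ⟪hA.eigenvectorBasis i, v⟫_𝕜 = 0
    · simp [hi]
    · exact mul_le_mul_of_nonneg_right (hsupp i hi).le (sq_nonneg _)
  · exact mul_lt_mul_of_pos_right (hsupp i₀ hi₀) (by positivity)

theorem card_eigenvalues_gt_le_of_ker (hA : A.IsHermitian) (x : ℝ) {ι : Type*} [Fintype ι]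
    (L : EuclideanSpace 𝕜 n →ₗ[𝕜] ι → 𝕜)
    (hL : ∀ v, L v = 0 → RCLike.re ⟪v, A.toEuclideanLin v⟫_𝕜 ≤ x * ‖v‖ ^ 2) :
    #{i | x < hA.eigenvalues i} ≤ Fintype.card ι := by
  set S : Finset n := {i | x < hA.eigenvalues i}
  let Φ := Fintype.linearCombination 𝕜 fun i : S => hA.eigenvectorBasis i
  have hΦ : Function.Injective Φ :=
    (hA.eigenvectorBasis.orthonormal.linearIndependent.comp _
      Subtype.val_injective).fintypeLinearCombination_injective
  by_contra! hcard
  obtain ⟨c, hc, hc0⟩ := (Submodule.ne_bot_iff _).mp <|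
    LinearMap.ker_ne_bot_of_finrank_lt (f := L ∘ₗ Φ) (by simpa using hcard)
  have hsupp : ∀ i, ⟪hA.eigenvectorBasis i, Φ c⟫_𝕜 ≠ 0 → x < hA.eigenvalues i := by
    intro i hi
    by_contra hiS
    refine hi ?_
    simp only [Φ, Fintype.linearCombination_apply, inner_sum, inner_smul_right]
    refine Finset.sum_eq_zero fun j _ => ?_
    rw [hA.eigenvectorBasis.orthonormal.inner_eq_zero, mul_zero]
    rintro rfl
    exact hiS (Finset.mem_filter.mp j.2).2
  exact (hL _ hc).not_gt <|
    hA.mul_norm_sq_lt_re_inner_toEuclideanLin_self (hΦ.ne_iff' (map_zero Φ) |>.mpr hc0) hsupp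

end Spectral

section Coordinates

variable [LinearOrder n]

lemma re_star_dotProduct_mulVec_le_s3 (hA : A.IsHermitian) (v : n → 𝕜) :
    RCLike.re (star v ⬝ᵥ A *ᵥ v) ≤ ∑ j, RCLike.re (A j j) * ‖v j‖ ^ 2 +
      ∑ p : n × n with p.1 < p.2, 2 * ‖A p.1 p.2‖ * (‖v p.1‖ * ‖v p.2‖) := by
  have hexp : RCLike.re (star v ⬝ᵥ A *ᵥ v) =
      ∑ p : n × n, RCLike.re (star (v p.1) * A p.1 p.2 * v p.2) := by
    simp [dotProduct, mulVec, mul_sum, Fintype.sum_prod_type, mul_assoc]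
  have hterm : ∀ j k, RCLike.re (star (v j) * A j k * v k) ≤ ‖A j k‖ * (‖v j‖ * ‖v k‖) :=
    fun j k => (RCLike.re_le_norm _).trans_eq <| by simp only [norm_mul, norm_star]; ring
  rw [hexp, Fintype.sum_prod_eq_sum_diag_add_sum_lt]
  refine add_le_add (le_of_eq <| sum_congr rfl fun j _ => ?_) (sum_le_sum fun p _ => ?_)
  · dsimp only
    rw [mul_right_comm, RCLike.star_def, RCLike.conj_mul, ← RCLike.ofReal_pow,
      RCLike.re_ofReal_mul, mul_comm]
  · have h := add_le_add (hterm p.1 p.2) (hterm p.2 p.1)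
    have hnorm : ‖A p.2 p.1‖ = ‖A p.1 p.2‖ := by rw [← hA.apply p.1 p.2, norm_star]
    rw [hnorm] at h
    simp only [Prod.fst_swap, Prod.snd_swap]
    linarith

lemma re_star_dotProduct_mulVec_le_of_forall_lt_eq_zero (hA : A.IsHermitian)
    (hdiag : Antitone fun j => RCLike.re (A j j)) {v : n → 𝕜} {i : n}
    (hv : ∀ j < i, v j = 0) :
    RCLike.re (star v ⬝ᵥ A *ᵥ v) ≤
      (RCLike.re (A i i) + ∑ p : n × n with i ≤ p.1 ∧ p.1 < p.2, ‖A p.1 p.2‖) * ∑ j, ‖v j‖ ^ 2 := by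
  refine (hA.re_star_dotProduct_mulVec_le_s3 v).trans ?_
  rw [add_mul, mul_sum, sum_mul, sum_filter, sum_filter]
  refine add_le_add (sum_le_sum fun j _ => ?_) (sum_le_sum fun p _ => ?_)
  · rcases lt_or_ge j i with hj | hj
    · simp [hv j hj]
    · exact mul_le_mul_of_nonneg_right (hdiag hj) (sq_nonneg _)
  · split_ifs with hlt hp hp
    · have hsq : 2 * ‖v p.1‖ * ‖v p.2‖ ≤ ∑ j, ‖v j‖ ^ 2 :=
        (two_mul_le_add_sq _ _).trans <| add_le_sum (f := fun j => ‖v j‖ ^ 2)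
          (fun j _ => sq_nonneg _) (mem_univ _) (mem_univ _) hlt.ne
      nlinarith [norm_nonneg (A p.1 p.2)]
    · simp [hv p.1 (not_le.mp fun h => hp ⟨h, hlt⟩)]
    · exact absurd hp.2 hlt
    · exact le_rfl

end Coordinates

end Matrix.IsHermitian

theorem counting_le_diagonal_counting_general {M : ℕ}
    (F : Matrix (Fin M) (Fin M) ℂ) (hF : F.IsHermitian)
    (α : ℝ) (hα : 0 < α)
    (hmono : ∀ i j : Fin M, i ≤ j → (F j j).re ≤ (F i i).re)
    (hA1 : ∀ i : Fin M,
      ∑ p ∈ Finset.univ.filter (fun p : Fin M × Fin M => i ≤ p.1 ∧ p.1 < p.2),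
        ‖F p.1 p.2‖ ≤ α * (F i i).re)
    (x : ℝ) :
    (Finset.univ.filter (fun i => x < hF.eigenvalues i)).card
      ≤ (Finset.univ.filter (fun i : Fin M => x / (1 + α) < (F i i).re)).card := by
  set T : Finset (Fin M) := {i | x / (1 + α) < (F i i).re}
  refine (hF.card_eigenvalues_gt_le_of_ker x
    (LinearMap.pi fun j : T => EuclideanSpace.projₗ (j : Fin M)) ?_).trans_eq (Fintype.card_coe T)
  intro v hv
  obtain rfl | hv0 := eq_or_ne v 0
  · simp
  obtain ⟨i, hi, hlow⟩ := exists_ne_zero_and_forall_lt_eq_zero (f := (v : Fin M → ℂ)) (by simpa)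
  have hiT : i ∉ T := fun hiT => hi (congrFun hv ⟨i, hiT⟩)
  have hfi : (1 + α) * (F i i).re ≤ x := by
    rw [← le_div_iff₀' (by linarith)]
    simpa [T] using hiT
  calc RCLike.re ⟪v, F.toEuclideanLin v⟫_ℂ = RCLike.re (star (v : Fin M → ℂ) ⬝ᵥ F *ᵥ v) := by
        rw [EuclideanSpace.inner_eq_star_dotProduct, dotProduct_comm]; rfl
    _ ≤ ((F i i).re + ∑ p : Fin M × Fin M with i ≤ p.1 ∧ p.1 < p.2, ‖F p.1 p.2‖) *
          ∑ j, ‖v j‖ ^ 2 := hF.re_star_dotProduct_mulVec_le_of_forall_lt_eq_zero hmono hlow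
    _ ≤ x * ‖v‖ ^ 2 := by
        rw [EuclideanSpace.norm_sq_eq]
        gcongr
        linarith [hA1 i]

/-- Under (A1), for every `x ≥ 0`, the number of eigenvalues of `F` strictly
greater than `x` is at most the number of diagonal entries of `F` strictly greater than
`x/(1+α)` (which is the eigenvalue counting function of the diagonal part `F_D`). -/
theorem counting_le_diagonal_counting {M : ℕ} (hM : 1 ≤ M)
    (F : Matrix (Fin M) (Fin M) ℂ) (hF : F.IsHermitian)
    (α : ℝ) (hα : 0 < α)
    (hmono : ∀ i j : Fin M, i ≤ j → (F j j).re ≤ (F i i).re)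
    (hnonneg : ∀ i : Fin M, 0 ≤ (F i i).re)
    (hA1 : ∀ i : Fin M,
      ∑ p ∈ Finset.univ.filter (fun p : Fin M × Fin M => i ≤ p.1 ∧ p.1 < p.2),
        ‖F p.1 p.2‖ ≤ α * (F i i).re)
    (x : ℝ) (hx : 0 ≤ x) :
    (Finset.univ.filter (fun i => x < hF.eigenvalues i)).card
      ≤ (Finset.univ.filter (fun i : Fin M => x / (1 + α) < (F i i).re)).card :=
  counting_le_diagonal_counting_general F hF α hα hmono hA1 x
end

section
/- Let n_A, n_B be positive integers, let A be an n_A×n_A Hermitian complex matrix, B an n_B×n_B Hermitian complex matrix, and C an arbitrary n_A×n_B complex matrix, and let M be the (n_A+n_B)×(n_A+n_B) Hermitian block matrix with blocks A, C in the first block row and C*, B in the second block row. Then for every real x, the number of eigenvalues of B (counted with multiplicity) that are less than or equal to x is at most the number of eigenvalues of M (counted with multiplicity) that are less than or equal to x. -/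
/-!
This is the easy half of Cauchy interlacing, by a dimension count in the spirit of Courant–Fischer.
The eigenvectors of `B` with eigenvalue `≤ x` span a subspace on which `⟪v, B v⟫ ≤ x ‖v‖²`;
padding with zeros embeds it isometrically into the space of `M`, where the quadratic form of `M`
restricts to that of `B`. The eigenvectors of `M` with eigenvalue `> x` span a subspace on which
`⟪v, M v⟫ > x ‖v‖²` for `v ≠ 0`, so the two subspaces meet trivially and their dimensions add up
to at most `n_A + n_B`.
-/

open Module Submodule Matrix Finset
open scoped InnerProductSpace

namespace OrthonormalBasis

variable {𝕜 E ι : Type*} [RCLike 𝕜] [NormedAddCommGroup E] [InnerProductSpace 𝕜 E] [Fintype ι]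
  (b : OrthonormalBasis ι 𝕜 E) {T : E →ₗ[𝕜] E} {μ : ι → ℝ}

lemma repr_apply_of_apply_eq_smul (hb : ∀ i, T (b i) = (μ i : 𝕜) • b i) (v : E) (i : ι) :
    b.repr (T v) i = μ i * b.repr v i := by
  classical
  conv_lhs => rw [← b.sum_repr v]
  simp [hb, b.repr_self, Pi.single_apply, RCLike.real_smul_eq_coe_mul, mul_comm]

lemma re_inner_self_apply_eq_sum (hb : ∀ i, T (b i) = (μ i : 𝕜) • b i) (v : E) :
    RCLike.re ⟪v, T v⟫_𝕜 = ∑ i, μ i * ‖⟪b i, v⟫_𝕜‖ ^ 2 := by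
  rw [← b.repr.inner_map_map, PiLp.inner_apply, map_sum]
  refine sum_congr rfl fun i _ => ?_
  rw [b.repr_apply_of_apply_eq_smul hb, RCLike.inner_apply', mul_left_comm, RCLike.conj_mul,
    b.repr_apply_apply]
  norm_cast

lemma finrank_span_image_setOf (p : ι → Prop) [DecidablePred p] :
    finrank 𝕜 (span 𝕜 (b '' {i | p i})) = #{i | p i} := by
  rw [← coe_filter_univ, Set.image_eq_range]
  exact (finrank_span_eq_card (b.orthonormal.linearIndependent.comp _ Subtype.val_injective)).trans
    (Fintype.card_coe _)

lemma inner_eq_zero_of_mem_span_image {s : Set ι} {v : E} (hv : v ∈ span 𝕜 (b '' s)) {i : ι}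
    (hi : i ∉ s) : ⟪b i, v⟫_𝕜 = 0 := by
  refine mem_orthogonal_singleton_iff_inner_right.mp (span_le.mpr ?_ hv)
  rintro _ ⟨j, hj, rfl⟩
  exact mem_orthogonal_singleton_iff_inner_right.mpr (b.orthonormal.2 fun h => hi (h ▸ hj))

lemma re_inner_self_apply_le_of_mem_span (hb : ∀ i, T (b i) = (μ i : 𝕜) • b i) {x : ℝ} {v : E}
    (hv : v ∈ span 𝕜 (b '' {i | μ i ≤ x})) : RCLike.re ⟪v, T v⟫_𝕜 ≤ x * ‖v‖ ^ 2 := by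
  rw [b.re_inner_self_apply_eq_sum hb, ← b.sum_sq_norm_inner_right, mul_sum]
  refine sum_le_sum fun i _ => ?_
  by_cases hi : μ i ≤ x
  · exact mul_le_mul_of_nonneg_right hi (by positivity)
  · simp [b.inner_eq_zero_of_mem_span_image hv hi]

lemma lt_re_inner_self_apply_of_mem_span (hb : ∀ i, T (b i) = (μ i : 𝕜) • b i) {x : ℝ} {v : E}
    (hv : v ∈ span 𝕜 (b '' {i | x < μ i})) (hv₀ : v ≠ 0) :
    x * ‖v‖ ^ 2 < RCLike.re ⟪v, T v⟫_𝕜 := by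
  rw [b.re_inner_self_apply_eq_sum hb, ← b.sum_sq_norm_inner_right, mul_sum]
  have h_le (i : ι) : x * ‖⟪b i, v⟫_𝕜‖ ^ 2 ≤ μ i * ‖⟪b i, v⟫_𝕜‖ ^ 2 := by
    by_cases hi : x < μ i
    · exact mul_le_mul_of_nonneg_right hi.le (by positivity)
    · simp [b.inner_eq_zero_of_mem_span_image hv hi]
  obtain ⟨i, hi⟩ : ∃ i, ⟪b i, v⟫_𝕜 ≠ 0 := by
    by_contra! h
    exact hv₀ (b.repr.injective (by ext i; simp [b.repr_apply_apply, h]))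
  have hμ : x < μ i := by_contra fun h => hi (b.inner_eq_zero_of_mem_span_image hv h)
  exact sum_lt_sum (fun i _ => h_le i)
    ⟨i, mem_univ i, mul_lt_mul_of_pos_right hμ (pow_pos (norm_pos_iff.mpr hi) 2)⟩

theorem finrank_le_card_of_re_inner_self_apply_le (hb : ∀ i, T (b i) = (μ i : 𝕜) • b i) (x : ℝ)
    (W : Submodule 𝕜 E) (hW : ∀ v ∈ W, RCLike.re ⟪v, T v⟫_𝕜 ≤ x * ‖v‖ ^ 2) :
    finrank 𝕜 W ≤ #{i | μ i ≤ x} := by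
  have := Module.Finite.of_basis b.toBasis
  have hWU : Disjoint W (span 𝕜 (b '' {i | x < μ i})) := by
    refine disjoint_def.mpr fun v hvW hvU => by_contra fun hv => ?_
    exact (b.lt_re_inner_self_apply_of_mem_span hb hvU hv).not_ge (hW v hvW)
  have hdim := finrank_add_finrank_le_of_disjoint hWU
  rw [b.finrank_span_image_setOf, finrank_eq_card_basis b.toBasis] at hdim
  have hcard : #{i | μ i ≤ x} + #{i | x < μ i} = Fintype.card ι := by
    simpa only [not_le, card_univ] using card_filter_add_card_filter_not (s := univ) (μ · ≤ x)
  omega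

theorem card_le_of_compression {F κ : Type*} [NormedAddCommGroup F] [InnerProductSpace 𝕜 F]
    [Fintype κ] (hb : ∀ i, T (b i) = (μ i : 𝕜) • b i) (c : OrthonormalBasis κ 𝕜 F)
    {S : F →ₗ[𝕜] F} {ν : κ → ℝ} (hc : ∀ k, S (c k) = (ν k : 𝕜) • c k) (L : F →ₗᵢ[𝕜] E)
    (hL : ∀ w, ⟪L w, T (L w)⟫_𝕜 = ⟪w, S w⟫_𝕜) (x : ℝ) :
    #{k | ν k ≤ x} ≤ #{i | μ i ≤ x} := by
  rw [← c.finrank_span_image_setOf,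
    (equivMapOfInjective L.toLinearMap L.injective _).finrank_eq]
  refine b.finrank_le_card_of_re_inner_self_apply_le hb x _ ?_
  rintro _ ⟨w, hw, rfl⟩
  rw [LinearIsometry.coe_toLinearMap, hL, L.norm_map]
  exact c.re_inner_self_apply_le_of_mem_span hc hw

end OrthonormalBasis

lemma Matrix.IsHermitian.toEuclideanLin_eigenvectorBasis_s5 {𝕜 n : Type*} [RCLike 𝕜] [Fintype n]
    [DecidableEq n] {A : Matrix n n 𝕜} (hA : A.IsHermitian) (i : n) :
    toEuclideanLin A (hA.eigenvectorBasis i) = (hA.eigenvalues i : 𝕜) • hA.eigenvectorBasis i := by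
  rw [← RCLike.real_smul_eq_coe_smul, toLpLin_apply, hA.mulVec_eigenvectorBasis]
  rfl

namespace EuclideanSpace

variable (𝕜 α : Type*) {β : Type*} [RCLike 𝕜] [Fintype α] [Fintype β]

noncomputable def inrₗᵢ : EuclideanSpace 𝕜 β →ₗᵢ[𝕜] EuclideanSpace 𝕜 (α ⊕ β) where
  toFun w := WithLp.toLp 2 (Sum.elim 0 w.ofLp)
  map_add' u v := by ext (i | i) <;> simp
  map_smul' c v := by ext (i | i) <;> simp
  norm_map' w := by simp [EuclideanSpace.norm_eq, Fintype.sum_sum_type]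

variable {𝕜 α} [DecidableEq α] [DecidableEq β]

lemma inner_inrₗᵢ_toEuclideanLin_fromBlocks (A : Matrix α α 𝕜) (B : Matrix β β 𝕜)
    (C : Matrix α β 𝕜) (D : Matrix β α 𝕜) (v w : EuclideanSpace 𝕜 β) :
    ⟪inrₗᵢ 𝕜 α v, toEuclideanLin (fromBlocks A C D B) (inrₗᵢ 𝕜 α w)⟫_𝕜 =
      ⟪v, toEuclideanLin B w⟫_𝕜 := by
  simp [inrₗᵢ, inner_eq_star_dotProduct, fromBlocks_mulVec, Function.star_sumElim,
    sumElim_dotProduct_sumElim]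

end EuclideanSpace

theorem block_counting_le_bound_general {nA nB : ℕ}
    (A : Matrix (Fin nA) (Fin nA) ℂ) (B : Matrix (Fin nB) (Fin nB) ℂ)
    (C : Matrix (Fin nA) (Fin nB) ℂ)
    (hB : B.IsHermitian)
    (hM : (Matrix.fromBlocks A C Cᴴ B).IsHermitian) (x : ℝ) :
    (Finset.univ.filter (fun i => hB.eigenvalues i ≤ x)).card
      ≤ (Finset.univ.filter (fun i => hM.eigenvalues i ≤ x)).card :=
  hM.eigenvectorBasis.card_le_of_compression hM.toEuclideanLin_eigenvectorBasis_s5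
    hB.eigenvectorBasis hB.toEuclideanLin_eigenvectorBasis_s5 (EuclideanSpace.inrₗᵢ ℂ (Fin nA))
    (fun w => EuclideanSpace.inner_inrₗᵢ_toEuclideanLin_fromBlocks A B C Cᴴ w w) x

/-- For a Hermitian block matrix `M = [[A, C], [Cᴴ, B]]` and every real `x`,
the number of eigenvalues of `B` less than or equal to `x` is at most the number of
eigenvalues of `M` less than or equal to `x` (eigenvalues counted with multiplicity). -/
theorem block_counting_le_bound {nA nB : ℕ} (hnA : 0 < nA) (hnB : 0 < nB)
    (A : Matrix (Fin nA) (Fin nA) ℂ) (B : Matrix (Fin nB) (Fin nB) ℂ)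
    (C : Matrix (Fin nA) (Fin nB) ℂ)
    (hA : A.IsHermitian) (hB : B.IsHermitian)
    (hM : (Matrix.fromBlocks A C Cᴴ B).IsHermitian) (x : ℝ) :
    (Finset.univ.filter (fun i => hB.eigenvalues i ≤ x)).card
      ≤ (Finset.univ.filter (fun i => hM.eigenvalues i ≤ x)).card :=
  block_counting_le_bound_general A B C hB hM x
end

section
/- Let M ≥ 1 and let F be an M×M Hermitian complex matrix whose diagonal entries f_i := F_{i,i} satisfy f_1 ≥ f_2 ≥ … ≥ f_M ≥ 0 and assumption (A1) with constant α > 0, and suppose in addition there are constants f_+ > 0 and γ > 1 with f_i ≤ f_+ i^{−γ} for all i. Then the operator norm of F is at most (1+α) f_+; in particular the spectral radius ρ of F satisfies ρ ≤ ρ_+ := (1+α) f_+. -/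
/-!
For a Hermitian matrix the operator norm is the supremum of `|⟪x, F x⟫| / ‖x‖²`, so it suffices
to bound the quadratic form. Expanding `⟪x, F x⟫` entrywise and using `2 |x_i| |x_j| ≤ ‖x‖²`
for `i ≠ j`, it is at most `(max_i |F_ii| + ∑_{i<j} |F_ij|) ‖x‖²`, where Hermitian symmetry
pairs the entries below the diagonal with those above. Monotonicity and the decay bound at
`i = 1` give `|F_ii| ≤ f_1 ≤ f₊`, and (A1) at `i = 1` gives `∑_{i<j} |F_ij| ≤ α f₊`. The
eigenvalues of `F` lie in its spectrum, hence are bounded by the operator norm.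
-/

/-- The operator norm on square complex matrices induced by the Hermitian (ℓ²) norm. -/
noncomputable def l2OpNorm {n : Type*} [Fintype n] [DecidableEq n] (A : Matrix n n ℂ) : ℝ :=
  ‖Matrix.toEuclideanCLM (𝕜 := ℂ) A‖

open Finset Matrix

namespace ContinuousLinearMap

variable {𝕜 E : Type*} [RCLike 𝕜] [NormedAddCommGroup E] [InnerProductSpace 𝕜 E]

theorem norm_le_of_forall_abs_reApplyInnerSelf_le {T : E →L[𝕜] E} (hT : T.IsSymmetric)
    {C : ℝ} (hC : 0 ≤ C) (h : ∀ x, |T.reApplyInnerSelf x| ≤ C * ‖x‖ ^ 2) : ‖T‖ ≤ C := by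
  rw [T.norm_eq_iSup_rayleighQuotient hT]
  refine ciSup_le fun x => ?_
  rcases eq_or_ne x 0 with rfl | hx
  · simpa using hC
  rw [rayleighQuotient, abs_div, abs_sq, div_le_iff₀ (by positivity)]
  exact h x

end ContinuousLinearMap

namespace Matrix

section RCLike

variable {n 𝕜 : Type*} [RCLike 𝕜]

theorem IsHermitian.norm_apply_self {A : Matrix n n 𝕜} (hA : A.IsHermitian) (i : n) :
    ‖A i i‖ = |RCLike.re (A i i)| := by
  rw [← RCLike.norm_ofReal (K := 𝕜), hA.coe_re_apply_self]

variable [Fintype n]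

theorem norm_star_dotProduct_mulVec_le (A : Matrix n n 𝕜) (x : n → 𝕜) {d : ℝ}
    (hd : ∀ i, ‖A i i‖ ≤ d) :
    ‖star x ⬝ᵥ A *ᵥ x‖ ≤
      (d + (∑ p ∈ (univ : Finset n).offDiag, ‖A p.1 p.2‖) / 2) * ∑ i, ‖x i‖ ^ 2 := by
  classical
  set N := ∑ i, ‖x i‖ ^ 2
  have hcross : ∀ p ∈ (univ : Finset n).offDiag, ‖x p.1‖ * ‖x p.2‖ ≤ N / 2 := by
    intro p hp
    have hpair : ‖x p.1‖ ^ 2 + ‖x p.2‖ ^ 2 ≤ N := by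
      rw [← sum_pair (f := fun i => ‖x i‖ ^ 2) (mem_offDiag.1 hp).2.2]
      exact sum_le_sum_of_subset_of_nonneg (subset_univ _) fun i _ _ => by positivity
    nlinarith [sq_nonneg (‖x p.1‖ - ‖x p.2‖)]
  calc ‖star x ⬝ᵥ A *ᵥ x‖
      ≤ ∑ p ∈ (univ : Finset n) ×ˢ univ, ‖A p.1 p.2‖ * (‖x p.1‖ * ‖x p.2‖) := by
        rw [sum_product]
        refine (norm_sum_le _ _).trans (sum_le_sum fun i _ => ?_)
        rw [Pi.star_apply, norm_mul, norm_star, mulVec, dotProduct]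
        refine (mul_le_mul_of_nonneg_left (norm_sum_le _ _) (norm_nonneg _)).trans_eq ?_
        simp only [mul_sum, norm_mul]
        exact sum_congr rfl fun j _ => by ring
    _ = ∑ i, ‖A i i‖ * ‖x i‖ ^ 2
          + ∑ p ∈ (univ : Finset n).offDiag, ‖A p.1 p.2‖ * (‖x p.1‖ * ‖x p.2‖) := by
        rw [← diag_union_offDiag, sum_union (disjoint_diag_offDiag _), sum_diag]
        simp only [sq]
    _ ≤ ∑ i, d * ‖x i‖ ^ 2 + ∑ p ∈ (univ : Finset n).offDiag, ‖A p.1 p.2‖ * (N / 2) := by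
        gcongr with i _ p hp
        · exact hd i
        · exact hcross p hp
    _ = _ := by rw [← sum_mul, ← mul_sum]; ring

theorem IsHermitian.sum_offDiag_norm_eq [LinearOrder n] {A : Matrix n n 𝕜} (hA : A.IsHermitian) :
    ∑ p ∈ (univ : Finset n).offDiag, ‖A p.1 p.2‖
      = 2 * ∑ p ∈ (univ : Finset (n × n)) with p.1 < p.2, ‖A p.1 p.2‖ := by
  rw [← sum_filter_add_sum_filter_not _ (fun p : n × n => p.1 < p.2), two_mul]
  congr 1
  · refine sum_congr ?_ fun _ _ => rfl
    ext p
    simpa using fun h => h.ne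
  · refine sum_nbij' Prod.swap Prod.swap ?_ ?_ (fun _ _ => rfl) (fun _ _ => rfl) ?_
    · intro p; simpa using fun hne hle => hle.lt_of_ne' hne
    · intro p; simpa using fun hlt => ⟨hlt.ne', hlt.le⟩
    · intro p _
      rw [← hA.apply, norm_star]; rfl

end RCLike

variable {n : Type*} [Fintype n] [DecidableEq n]

theorem IsHermitian.l2OpNorm_le {A : Matrix n n ℂ} (hA : A.IsHermitian) {C : ℝ} (hC : 0 ≤ C)
    (h : ∀ x : n → ℂ, ‖star x ⬝ᵥ A *ᵥ x‖ ≤ C * ∑ i, ‖x i‖ ^ 2) : l2OpNorm A ≤ C := by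
  have hT : (toEuclideanCLM (𝕜 := ℂ) A).IsSymmetric := isSymmetric_toEuclideanLin_iff.mpr hA
  refine ContinuousLinearMap.norm_le_of_forall_abs_reApplyInnerSelf_le hT hC fun x => ?_
  rw [EuclideanSpace.norm_sq_eq]
  refine (RCLike.abs_re_le_norm _).trans ?_
  rw [norm_inner_symm, EuclideanSpace.inner_eq_star_dotProduct, ofLp_toEuclideanCLM,
    dotProduct_comm]
  exact h x

theorem IsHermitian.abs_eigenvalues_le_l2OpNorm {A : Matrix n n ℂ} (hA : A.IsHermitian) (i : n) :
    |hA.eigenvalues i| ≤ l2OpNorm A := by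
  have : Nonempty n := ⟨i⟩
  have hmem : (hA.eigenvalues i : ℂ) ∈ spectrum ℂ (toEuclideanCLM (𝕜 := ℂ) A) := by
    rw [AlgEquiv.spectrum_eq]
    exact spectrum.algebraMap_mem ℂ (hA.eigenvalues_mem_spectrum_real i)
  rw [l2OpNorm]
  simpa using spectrum.norm_le_norm_of_mem hmem

end Matrix

theorem opNorm_and_spectral_radius_bound_general {M : ℕ} (hM : 1 ≤ M)
    (F : Matrix (Fin M) (Fin M) ℂ) (hF : F.IsHermitian)
    (α fplus γ : ℝ) (hα : 0 < α) (hfplus : 0 < fplus)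
    (hmono : ∀ i j : Fin M, i ≤ j → (F j j).re ≤ (F i i).re)
    (hnonneg : ∀ i : Fin M, 0 ≤ (F i i).re)
    (hA1 : ∀ i : Fin M,
      ∑ p ∈ Finset.univ.filter (fun p : Fin M × Fin M => i ≤ p.1 ∧ p.1 < p.2),
        ‖F p.1 p.2‖ ≤ α * (F i i).re)
    (hA2 : ∀ i : Fin M, (F i i).re ≤ fplus * ((i : ℝ) + 1) ^ (-γ)) :
    l2OpNorm F ≤ (1 + α) * fplus
    ∧ ∀ i, |hF.eigenvalues i| ≤ (1 + α) * fplus := by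
  let i₀ : Fin M := ⟨0, hM⟩
  have hi₀ : ∀ j, i₀ ≤ j := fun j => Nat.zero_le j
  have hf₀ : (F i₀ i₀).re ≤ fplus := by simpa [i₀] using hA2 i₀
  have hdiag : ∀ i, ‖F i i‖ ≤ fplus := fun i => by
    rw [hF.norm_apply_self, RCLike.re_to_complex, abs_of_nonneg (hnonneg i)]
    exact (hmono i₀ i (hi₀ i)).trans hf₀
  have hupper :
      ∑ p ∈ (univ : Finset (Fin M × Fin M)) with p.1 < p.2, ‖F p.1 p.2‖ ≤ α * fplus := by
    simpa only [hi₀, true_and] using (hA1 i₀).trans (by gcongr)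
  have hnorm : l2OpNorm F ≤ (1 + α) * fplus := by
    refine hF.l2OpNorm_le (by positivity) fun x => ?_
    refine (norm_star_dotProduct_mulVec_le F x hdiag).trans ?_
    rw [hF.sum_offDiag_norm_eq]
    gcongr
    linarith
  exact ⟨hnorm, fun i => (hF.abs_eigenvalues_le_l2OpNorm i).trans hnorm⟩

/-- Under (A1) and the power decay `f_i ≤ f₊ i^{-γ}` (γ > 1), the operator
norm of `F` is at most `(1+α) f₊`; in particular the spectral radius of `F` (the maximum
of the absolute values of its eigenvalues) is at most `ρ₊ := (1+α) f₊`. -/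
theorem opNorm_and_spectral_radius_bound {M : ℕ} (hM : 1 ≤ M)
    (F : Matrix (Fin M) (Fin M) ℂ) (hF : F.IsHermitian)
    (α fplus γ : ℝ) (hα : 0 < α) (hfplus : 0 < fplus) (hγ : 1 < γ)
    (hmono : ∀ i j : Fin M, i ≤ j → (F j j).re ≤ (F i i).re)
    (hnonneg : ∀ i : Fin M, 0 ≤ (F i i).re)
    (hA1 : ∀ i : Fin M,
      ∑ p ∈ Finset.univ.filter (fun p : Fin M × Fin M => i ≤ p.1 ∧ p.1 < p.2),
        ‖F p.1 p.2‖ ≤ α * (F i i).re)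
    (hA2 : ∀ i : Fin M, (F i i).re ≤ fplus * ((i : ℝ) + 1) ^ (-γ)) :
    l2OpNorm F ≤ (1 + α) * fplus
    ∧ ∀ i, |hF.eigenvalues i| ≤ (1 + α) * fplus :=
  opNorm_and_spectral_radius_bound_general hM F hF α fplus γ hα hfplus hmono hnonneg hA1 hA2
end

section
/- Let M ≥ 1, let F be an M×M Hermitian positive semidefinite complex matrix with eigenvalues λ_1, …, λ_M, let κ > 0, ρ_+ > 0 and γ > 1, and suppose that for every x > 0 the number N(x;F) of eigenvalues of F strictly greater than x satisfies N(x;F) ≤ ρ_+^{1/γ} x^{−1/γ}, and that λ_i ≤ ρ_+ for all i. Then Σ_{i=1}^M log₂(1 + κ M λ_i) ≤ ((κ ρ_+)^{1/γ} / ln 2) · M^{1/γ} · ∫_0^{κ ρ_+ M} x^{−1/γ} / (1 + x) dx. -/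
/-! For `0 ≤ t ≤ T` one has `log (1 + t) = ∫₀ᵀ 1_{x < t} / (1 + x) dx`, so summing over the rescaled
eigenvalues `tᵢ = κ M λᵢ ≤ κ ρ₊ M` gives `∫₀ᵀ #{i | x < tᵢ} / (1 + x) dx`, and the counting bound,
transported through the rescaling, dominates the integrand by `(κ ρ₊ M)^{1/γ} x^{-1/γ} / (1 + x)`. -/

open MeasureTheory Set
open scoped ComplexOrder Finset

theorem integral_inv_one_add {t : ℝ} (ht : 0 ≤ t) :
    ∫ x in (0 : ℝ)..t, (1 + x)⁻¹ = Real.log (1 + t) := by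
  have h := intervalIntegral.integral_comp_add_right (fun y : ℝ => y⁻¹) (1 : ℝ) (a := 0) (b := t)
  rw [integral_inv_of_pos (by norm_num) (by linarith)] at h
  simpa [add_comm] using h

theorem log_one_add_eq_integral_indicator_Iio {t T : ℝ} (ht : 0 ≤ t) (htT : t ≤ T) :
    Real.log (1 + t) = ∫ x in (0 : ℝ)..T, (Iio t).indicator (fun x => (1 + x)⁻¹) x := by
  rw [← integral_inv_one_add ht, ← intervalIntegral.integral_indicator ⟨ht, htT⟩]
  refine intervalIntegral.integral_congr_ae ?_
  filter_upwards [indicator_ae_eq_of_ae_eq_set (f := fun x : ℝ => (1 + x)⁻¹) Iio_ae_eq_Iic]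
    with x hx _
  exact hx.symm

theorem sum_indicator_Iio_eq_card_mul {ι : Type*} [Fintype ι] (t : ι → ℝ) (g : ℝ → ℝ)
    (x : ℝ) : ∑ i, (Iio (t i)).indicator g x = #{i | x < t i} * g x := by
  simp [indicator_apply, Finset.sum_ite]

theorem sum_log_one_add_le_integral {ι : Type*} [Fintype ι] (t : ι → ℝ) {T C s : ℝ}
    (hT : 0 ≤ T) (ht : ∀ i, 0 ≤ t i) (htT : ∀ i, t i ≤ T) (hs : -1 < s)
    (hcount : ∀ x, 0 < x → (#{i | x < t i} : ℝ) ≤ C * x ^ s) :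
    ∑ i, Real.log (1 + t i) ≤ C * ∫ x in (0 : ℝ)..T, x ^ s / (1 + x) := by
  have hinv : ContinuousOn (fun x : ℝ => (1 + x)⁻¹) (uIcc 0 T) :=
    (continuousOn_const.add continuousOn_id).inv₀ fun x hx => by
      rw [uIcc_of_le hT] at hx; simp only [Pi.add_apply, id]; linarith [hx.1]
  have hind (i : ι) :
      IntervalIntegrable ((Iio (t i)).indicator fun x => (1 + x)⁻¹) volume 0 T :=
    intervalIntegrable_iff.2 <|
      (intervalIntegrable_iff.1 hinv.intervalIntegrable).indicator measurableSet_Iio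
  have hsum : (fun x => ∑ i, (Iio (t i)).indicator (fun x => (1 + x)⁻¹) x) =
      fun x => (#{i | x < t i} : ℝ) * (1 + x)⁻¹ :=
    funext fun x => sum_indicator_Iio_eq_card_mul t _ x
  have hpow : IntervalIntegrable (fun x => C * (x ^ s / (1 + x))) volume 0 T := by
    simpa only [div_eq_mul_inv] using
      ((intervalIntegral.intervalIntegrable_rpow' hs).mul_continuousOn hinv).const_mul C
  calc ∑ i, Real.log (1 + t i)
      = ∑ i, ∫ x in (0 : ℝ)..T, (Iio (t i)).indicator (fun x => (1 + x)⁻¹) x :=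
        Finset.sum_congr rfl fun i _ => log_one_add_eq_integral_indicator_Iio (ht i) (htT i)
    _ = ∫ x in (0 : ℝ)..T, (#{i | x < t i} : ℝ) * (1 + x)⁻¹ := by
        rw [← intervalIntegral.integral_finsetSum fun i _ => hind i, hsum]
    _ ≤ ∫ x in (0 : ℝ)..T, C * (x ^ s / (1 + x)) := by
        refine intervalIntegral.integral_mono_on_of_le_Ioo hT ?_ hpow fun x hx => ?_
        · rw [← hsum, ← Finset.sum_fn]
          exact IntervalIntegrable.sum Finset.univ fun i _ => hind i
        · rw [← mul_div_assoc, div_eq_mul_inv]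
          have : 0 < 1 + x := by linarith [hx.1]
          exact mul_le_mul_of_nonneg_right (hcount x hx.1) (inv_nonneg.2 this.le)
    _ = C * ∫ x in (0 : ℝ)..T, x ^ s / (1 + x) := intervalIntegral.integral_const_mul _ _

theorem card_lt_const_mul_le {ι : Type*} [Fintype ι] (lam : ι → ℝ) {c ρ s x : ℝ} (hc : 0 < c)
    (hcount : ∀ y, 0 < y → (#{i | y < lam i} : ℝ) ≤ ρ * y ^ s) (hx : 0 < x) :
    (#{i | x < c * lam i} : ℝ) ≤ ρ * c ^ (-s) * x ^ s := by
  calc (#{i | x < c * lam i} : ℝ) = #{i | x / c < lam i} := by simp_rw [div_lt_iff₀' hc]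
    _ ≤ ρ * (x / c) ^ s := hcount _ (div_pos hx hc)
    _ = ρ * c ^ (-s) * x ^ s := by
      rw [Real.div_rpow hx.le hc.le, Real.rpow_neg hc.le]; ring

theorem capacity_le_integral_bound_general {M : ℕ}
    (F : Matrix (Fin M) (Fin M) ℂ) (hF : F.PosSemidef)
    (κ ρplus γ : ℝ) (hκ : 0 < κ) (hρ : 0 < ρplus) (hγ : 1 < γ)
    (hcount : ∀ x : ℝ, 0 < x →
      ((Finset.univ.filter (fun i => x < hF.1.eigenvalues i)).card : ℝ)
        ≤ ρplus ^ (1/γ) * x ^ (-1/γ))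
    (hbound : ∀ i, hF.1.eigenvalues i ≤ ρplus) :
    ∑ i, Real.logb 2 (1 + κ * M * hF.1.eigenvalues i)
      ≤ (κ * ρplus) ^ (1/γ) / Real.log 2 * (M : ℝ) ^ (1/γ)
          * ∫ x in (0:ℝ)..(κ * ρplus * M), x ^ (-1/γ) / (1 + x) := by
  rcases Nat.eq_zero_or_pos M with rfl | hMpos
  · simp
  have hκM : 0 < κ * M := by positivity
  have hs : -1 < -1 / γ := by
    rw [neg_div, neg_lt_neg_iff]; exact (div_lt_one (by linarith)).2 hγ
  have key := sum_log_one_add_le_integral (fun i => κ * M * hF.1.eigenvalues i)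
    (T := κ * ρplus * M) (by positivity)
    (fun i => mul_nonneg hκM.le (hF.eigenvalues_nonneg i))
    (fun i => by linarith [mul_le_mul_of_nonneg_left (hbound i) hκM.le]) hs
    (fun x hx => card_lt_const_mul_le _ hκM hcount hx)
  calc ∑ i, Real.logb 2 (1 + κ * M * hF.1.eigenvalues i)
      = (∑ i, Real.log (1 + κ * M * hF.1.eigenvalues i)) / Real.log 2 := by
        simp only [Real.logb, Finset.sum_div]
    _ ≤ _ := div_le_div_of_nonneg_right key (Real.log_pos one_lt_two).le
    _ = _ := by
        rw [neg_div, neg_neg, Real.mul_rpow hκ.le hρ.le, Real.mul_rpow hκ.le M.cast_nonneg]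
        ring

/-- If the counting function of the Hermitian PSD matrix `F` satisfies
`N(x;F) ≤ ρ₊^{1/γ} x^{-1/γ}` for all `x > 0` and all eigenvalues are at most `ρ₊`, then
`∑ᵢ log₂(1 + κ M λᵢ) ≤ ((κρ₊)^{1/γ}/ln 2) M^{1/γ} ∫₀^{κρ₊M} x^{-1/γ}/(1+x) dx`. -/
theorem capacity_le_integral_bound {M : ℕ} (hM : 1 ≤ M)
    (F : Matrix (Fin M) (Fin M) ℂ) (hF : F.PosSemidef)
    (κ ρplus γ : ℝ) (hκ : 0 < κ) (hρ : 0 < ρplus) (hγ : 1 < γ)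
    (hcount : ∀ x : ℝ, 0 < x →
      ((Finset.univ.filter (fun i => x < hF.1.eigenvalues i)).card : ℝ)
        ≤ ρplus ^ (1/γ) * x ^ (-1/γ))
    (hbound : ∀ i, hF.1.eigenvalues i ≤ ρplus) :
    ∑ i, Real.logb 2 (1 + κ * M * hF.1.eigenvalues i)
      ≤ (κ * ρplus) ^ (1/γ) / Real.log 2 * (M : ℝ) ^ (1/γ)
          * ∫ x in (0:ℝ)..(κ * ρplus * M), x ^ (-1/γ) / (1 + x) :=
  capacity_le_integral_bound_general F hF κ ρplus γ hκ hρ hγ hcount hbound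
end

section
/- Let M ≥ 1 and let F be an M×M Hermitian complex matrix whose diagonal entries f_i := F_{i,i} satisfy f_1 ≥ f_2 ≥ … ≥ f_M ≥ 0. Suppose (A1'): there is α > 0 such that for each i₀ = 0,…,M−1 the off-diagonal part of the trailing block F̃^{(i₀)} := (F_{i,j})_{i₀+1 ≤ i,j ≤ M} has operator norm at most α f_{i₀+1}. Suppose also (A2'): there is a function f : [1,∞) → [0,∞), continuous and decreasing, with f_i ≤ f(i) for all i = 1,…,M. Then for every x > 0 and every real y ≥ 1 such that (1+α) f(y) ≤ x, one has N(x;F) ≤ min(M, y). -/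
/-- The trailing block `F̃^{(i₀)} = (F_{i,j})_{i₀+1 ≤ i,j ≤ M}` obtained by deleting the
first `i₀` rows and columns of `F` (0-based indexing). -/
noncomputable def trailingBlock {M : ℕ} (F : Matrix (Fin M) (Fin M) ℂ) (i₀ : ℕ) :
    Matrix (Fin (M - i₀)) (Fin (M - i₀)) ℂ :=
  fun i j => F ⟨i₀ + i.1, by have := i.isLt; omega⟩ ⟨i₀ + j.1, by have := j.isLt; omega⟩

/-! If more than `k` eigenvalues of `F` exceeded `x`, their eigenvectors would span a space of
dimension `> k`, which meets the `(M - k)`-dimensional space of vectors supported on the last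
`M - k` coordinates. On such a vector `v`, `⟪v, F v⟫` is the quadratic form of the trailing block
`F̃^{(k)}`, split into its off-diagonal part, bounded by (A1'), and its diagonal part, bounded by
`f_{k+1}` since the diagonal is decreasing. So `⟪v, F v⟫ ≤ (1 + α) f_{k+1} ‖v‖²`, and for
`k = ⌊y⌋` (A2') gives `f_{k+1} ≤ f(y)`, contradicting `(1 + α) f(y) ≤ x`. -/

open Module RCLike Matrix WithLp Finset
open scoped InnerProductSpace

section Orthonormal

variable {𝕜 E ι : Type*} [RCLike 𝕜] [NormedAddCommGroup E] [InnerProductSpace 𝕜 E] [Fintype ι]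
  {u : ι → E} {T : E →ₗ[𝕜] E} {μ : ι → ℝ}

theorem Orthonormal.re_inner_sum_smul_apply (hu : Orthonormal 𝕜 u)
    (hTu : ∀ i, T (u i) = (μ i : 𝕜) • u i) (c : ι → 𝕜) :
    re ⟪∑ i, c i • u i, T (∑ i, c i • u i)⟫_𝕜 = ∑ i, μ i * ‖c i‖ ^ 2 := by
  have hT : T (∑ i, c i • u i) = ∑ i, (c i * μ i) • u i := by
    simp only [map_sum, map_smul, hTu, smul_smul]
  rw [hT, hu.inner_sum, map_sum]
  refine Finset.sum_congr rfl fun i _ => ?_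
  rw [← mul_assoc, RCLike.conj_mul, mul_comm]
  norm_cast

theorem Orthonormal.norm_sum_smul_sq (hu : Orthonormal 𝕜 u) (c : ι → 𝕜) :
    ‖∑ i, c i • u i‖ ^ 2 = ∑ i, ‖c i‖ ^ 2 := by
  rw [@norm_sq_eq_re_inner 𝕜, hu.inner_sum, map_sum]
  refine Finset.sum_congr rfl fun i _ => ?_
  rw [RCLike.conj_mul]
  norm_cast

/-- Counting half of the Courant–Fischer principle: the eigenvectors `u i` span a space on which
the quadratic form exceeds `x ‖v‖²`, so it meets `S` trivially. -/
theorem Orthonormal.card_add_finrank_le [FiniteDimensional 𝕜 E] (hu : Orthonormal 𝕜 u)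
    (hTu : ∀ i, T (u i) = (μ i : 𝕜) • u i) {x : ℝ} (hμ : ∀ i, x < μ i) (S : Submodule 𝕜 E)
    (hS : ∀ v ∈ S, re ⟪v, T v⟫_𝕜 ≤ x * ‖v‖ ^ 2) :
    Fintype.card ι + finrank 𝕜 S ≤ finrank 𝕜 E := by
  by_contra! h
  have hker : LinearMap.ker (S.mkQ ∘ₗ Fintype.linearCombination 𝕜 u) ≠ ⊥ := by
    apply LinearMap.ker_ne_bot_of_finrank_lt
    have := S.finrank_quotient_add_finrank
    rw [Module.finrank_fintype_fun_eq_card]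
    omega
  obtain ⟨c, hcS, hc⟩ := (Submodule.ne_bot_iff _).mp hker
  have hvS : ∑ i, c i • u i ∈ S := by
    rwa [LinearMap.mem_ker, LinearMap.comp_apply, Submodule.mkQ_apply,
      Submodule.Quotient.mk_eq_zero, Fintype.linearCombination_apply] at hcS
  have hlt : x * ‖∑ i, c i • u i‖ ^ 2 < re ⟪∑ i, c i • u i, T (∑ i, c i • u i)⟫_𝕜 := by
    rw [hu.norm_sum_smul_sq, hu.re_inner_sum_smul_apply hTu, Finset.mul_sum]
    obtain ⟨i, hi⟩ := Function.ne_iff.mp hc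
    refine Finset.sum_lt_sum (fun j _ => ?_) ⟨i, Finset.mem_univ _, ?_⟩
    · exact mul_le_mul_of_nonneg_right (hμ j).le (by positivity)
    · exact mul_lt_mul_of_pos_right (hμ i) (by positivity)
  exact (hS _ hvS).not_gt hlt

end Orthonormal

section Matrix

variable {𝕜 : Type*} [RCLike 𝕜] {m n : Type*} [Fintype m] [Fintype n]

theorem Matrix.IsHermitian.toEuclideanCLM_eigenvectorBasis [DecidableEq n] {A : Matrix n n 𝕜}
    (hA : A.IsHermitian) (i : n) : toEuclideanCLM (𝕜 := 𝕜) A (hA.eigenvectorBasis i) =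
      (hA.eigenvalues i : 𝕜) • hA.eigenvectorBasis i := by
  apply WithLp.ofLp_injective 2
  rw [ofLp_toEuclideanCLM, hA.mulVec_eigenvectorBasis, WithLp.ofLp_smul,
    RCLike.real_smul_eq_coe_smul (K := 𝕜)]

namespace EuclideanSpace

noncomputable def extendByZero {e : m → n} (he : Function.Injective e) :
    EuclideanSpace 𝕜 m →ₗᵢ[𝕜] EuclideanSpace 𝕜 n :=
  LinearMap.isometryOfInner
    ((WithLp.linearEquiv 2 𝕜 (n → 𝕜)).symm.toLinearMap ∘ₗ Function.ExtendByZero.linearMap 𝕜 e ∘ₗ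
      (WithLp.linearEquiv 2 𝕜 (m → 𝕜)).toLinearMap) fun w w' => by
    simp only [PiLp.inner_apply]
    symm
    refine Fintype.sum_of_injective e he _ _ (fun p hp => ?_) (fun i => ?_)
    · simp [Function.extend_apply' _ _ _ (by simpa using hp)]
    · simp [he.extend_apply]

variable {e : m → n} (he : Function.Injective e)

theorem extendByZero_apply (w : EuclideanSpace 𝕜 m) (i : m) : extendByZero he w (e i) = w i := by
  simp [extendByZero, LinearMap.coe_isometryOfInner, he.extend_apply]

theorem extendByZero_apply_of_notMem (w : EuclideanSpace 𝕜 m) {p : n} (hp : p ∉ Set.range e) :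
    extendByZero he w p = 0 := by
  simp [extendByZero, LinearMap.coe_isometryOfInner,
    Function.extend_apply' _ _ _ (by simpa using hp)]

theorem inner_extendByZero_toEuclideanCLM [DecidableEq m] [DecidableEq n] (A : Matrix n n 𝕜)
    (w : EuclideanSpace 𝕜 m) :
    ⟪extendByZero he w, toEuclideanCLM (𝕜 := 𝕜) A (extendByZero he w)⟫_𝕜 =
      ⟪w, toEuclideanCLM (𝕜 := 𝕜) (A.submatrix e e) w⟫_𝕜 := by
  have hAw : ∀ i, (A *ᵥ ofLp (extendByZero he w)) (e i) = (A.submatrix e e *ᵥ ofLp w) i := by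
    intro i
    simp only [mulVec, dotProduct, submatrix_apply]
    symm
    refine Fintype.sum_of_injective e he _ _ (fun p hp => ?_) (fun j => ?_)
    · simp [extendByZero_apply_of_notMem he w hp]
    · simp [extendByZero_apply he]
  simp only [PiLp.inner_apply, ofLp_toEuclideanCLM]
  symm
  refine Fintype.sum_of_injective e he _ _ (fun p hp => ?_) (fun i => ?_)
  · simp [extendByZero_apply_of_notMem he w hp]
  · simp [extendByZero_apply he, hAw]

end EuclideanSpace

theorem Matrix.re_inner_toEuclideanCLM_le_of_diag_offDiag [DecidableEq m] {B : Matrix m m 𝕜}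
    {c d : ℝ} (hdiag : ∀ i, re (B i i) ≤ d)
    (hoff : ‖toEuclideanCLM (𝕜 := 𝕜) (B - diagonal fun i => B i i)‖ ≤ c) (w : EuclideanSpace 𝕜 m) :
    re ⟪w, toEuclideanCLM (𝕜 := 𝕜) B w⟫_𝕜 ≤ (c + d) * ‖w‖ ^ 2 := by
  set O := toEuclideanCLM (𝕜 := 𝕜) (B - diagonal fun i => B i i)
  have hsplit : toEuclideanCLM (𝕜 := 𝕜) B w =
      O w + toEuclideanCLM (𝕜 := 𝕜) (diagonal fun i => B i i) w := by
    simp [O, map_sub]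
  have hO : re ⟪w, O w⟫_𝕜 ≤ c * ‖w‖ ^ 2 :=
    calc re ⟪w, O w⟫_𝕜 ≤ ‖w‖ * ‖O w‖ := (re_le_norm _).trans (norm_inner_le_norm _ _)
      _ ≤ ‖w‖ * (‖O‖ * ‖w‖) := by gcongr; exact O.le_opNorm w
      _ = ‖O‖ * ‖w‖ ^ 2 := by ring
      _ ≤ c * ‖w‖ ^ 2 := by gcongr
  have hD : re ⟪w, toEuclideanCLM (𝕜 := 𝕜) (diagonal fun i => B i i) w⟫_𝕜 ≤ d * ‖w‖ ^ 2 := by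
    simp only [PiLp.inner_apply, ofLp_toEuclideanCLM, mulVec_diagonal, map_sum,
      EuclideanSpace.norm_sq_eq, Finset.mul_sum]
    refine Finset.sum_le_sum fun i _ => ?_
    rw [← smul_eq_mul (B i i), inner_smul_right, inner_self_eq_norm_sq_to_K, ← ofReal_pow,
      re_mul_ofReal]
    exact mul_le_mul_of_nonneg_right (hdiag i) (by positivity)
  rw [hsplit, inner_add_right, map_add]
  linarith

theorem Matrix.IsHermitian.card_eigenvalues_gt_add_finrank_le [DecidableEq n] {A : Matrix n n 𝕜}
    (hA : A.IsHermitian) {x : ℝ} (S : Submodule 𝕜 (EuclideanSpace 𝕜 n))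
    (hS : ∀ v ∈ S, re ⟪v, toEuclideanCLM (𝕜 := 𝕜) A v⟫_𝕜 ≤ x * ‖v‖ ^ 2) :
    #{i | x < hA.eigenvalues i} + finrank 𝕜 S ≤ Fintype.card n := by
  have := (hA.eigenvectorBasis.orthonormal.comp _ Subtype.val_injective).card_add_finrank_le
    (T := (toEuclideanCLM (𝕜 := 𝕜) A : EuclideanSpace 𝕜 n →ₗ[𝕜] EuclideanSpace 𝕜 n))
    (μ := fun i : {i // x < hA.eigenvalues i} => hA.eigenvalues i)
    (fun i => hA.toEuclideanCLM_eigenvectorBasis i) (fun i => i.2) S hS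
  rwa [Fintype.card_subtype, finrank_euclideanSpace] at this

theorem Matrix.IsHermitian.card_eigenvalues_gt_le_of_trailingBlock {M : ℕ}
    {F : Matrix (Fin M) (Fin M) ℂ} (hF : F.IsHermitian) {k : ℕ} (hk : k ≤ M) {c d x : ℝ}
    (hdiag : ∀ i : Fin M, k ≤ i → (F i i).re ≤ d)
    (hoff : l2OpNorm (trailingBlock F k - diagonal fun i => trailingBlock F k i i) ≤ c)
    (hx : c + d ≤ x) :
    #{i | x < hF.eigenvalues i} ≤ k := by
  let e : Fin (M - k) → Fin M := fun i => ⟨k + i, by omega⟩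
  have he : e.Injective := fun i j h => Fin.ext (by simpa [e] using h)
  have hblock : trailingBlock F k = F.submatrix e e := rfl
  let S := LinearMap.range (EuclideanSpace.extendByZero (𝕜 := ℂ) he).toLinearMap
  have hS : finrank ℂ S = M - k := by
    rw [LinearMap.finrank_range_of_inj (LinearIsometry.injective _), finrank_euclideanSpace_fin]
  have hcount := hF.card_eigenvalues_gt_add_finrank_le (x := x) S ?_
  · rw [hS, Fintype.card_fin] at hcount
    omega
  rintro _ ⟨w, rfl⟩
  rw [LinearIsometry.coe_toLinearMap, EuclideanSpace.inner_extendByZero_toEuclideanCLM, ← hblock,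
    LinearIsometry.norm_map]
  calc _ ≤ (c + d) * ‖w‖ ^ 2 :=
        re_inner_toEuclideanCLM_le_of_diag_offDiag (fun i => hdiag (e i) (by simp [e])) hoff w
    _ ≤ x * ‖w‖ ^ 2 := by gcongr

end Matrix

theorem counting_bound_general_general {M : ℕ}
    (F : Matrix (Fin M) (Fin M) ℂ) (hF : F.IsHermitian)
    (α : ℝ) (hα : 0 < α)
    (hmono : ∀ i j : Fin M, i ≤ j → (F j j).re ≤ (F i i).re)
    (hA1' : ∀ (i₀ : ℕ) (hi₀ : i₀ < M),
      l2OpNorm (trailingBlock F i₀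
          - Matrix.diagonal (fun i => trailingBlock F i₀ i i))
        ≤ α * (F ⟨i₀, hi₀⟩ ⟨i₀, hi₀⟩).re)
    (f : ℝ → ℝ)
    (hfanti : AntitoneOn f (Set.Ici (1:ℝ)))
    (hA2' : ∀ i : Fin M, (F i i).re ≤ f ((i : ℝ) + 1))
    (x : ℝ) (y : ℝ) (hy : 1 ≤ y) (hxy : (1 + α) * f y ≤ x) :
    ((Finset.univ.filter (fun i => x < hF.eigenvalues i)).card : ℝ)
      ≤ min (M : ℝ) y := by
  have hcard_le : (#{i | x < hF.eigenvalues i} : ℝ) ≤ M := by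
    exact_mod_cast (card_filter_le _ _).trans_eq (card_fin M)
  have hfloor : (⌊y⌋₊ : ℝ) ≤ y := Nat.floor_le (by linarith)
  refine le_min hcard_le ?_
  rcases lt_or_ge ⌊y⌋₊ M with hk | hk
  · have hfk : (F ⟨⌊y⌋₊, hk⟩ ⟨⌊y⌋₊, hk⟩).re ≤ f y :=
      (hA2' _).trans (hfanti (Set.mem_Ici.2 hy) (by simp) (Nat.lt_floor_add_one y).le)
    have hcard := hF.card_eigenvalues_gt_le_of_trailingBlock (x := x) hk.le
      (fun i hi => hmono ⟨_, hk⟩ i hi) (hA1' _ hk) (by nlinarith)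
    exact (Nat.cast_le.2 hcard).trans hfloor
  · exact hcard_le.trans ((Nat.cast_le.2 hk).trans hfloor)

/-- Under (A1') (operator-norm bounds on the off-diagonal parts of the
trailing blocks) and (A2') (domination of the diagonal by a continuous decreasing
function `f` on `[1,∞)` with nonnegative values), for every `x > 0` and every `y ≥ 1`
with `(1+α) f(y) ≤ x`, the number of eigenvalues of `F` strictly greater than `x` is at
most `min (M, y)`. -/
theorem counting_bound_general {M : ℕ} (hM : 1 ≤ M)
    (F : Matrix (Fin M) (Fin M) ℂ) (hF : F.IsHermitian)
    (α : ℝ) (hα : 0 < α)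
    (hmono : ∀ i j : Fin M, i ≤ j → (F j j).re ≤ (F i i).re)
    (hnonneg : ∀ i : Fin M, 0 ≤ (F i i).re)
    (hA1' : ∀ (i₀ : ℕ) (hi₀ : i₀ < M),
      l2OpNorm (trailingBlock F i₀
          - Matrix.diagonal (fun i => trailingBlock F i₀ i i))
        ≤ α * (F ⟨i₀, hi₀⟩ ⟨i₀, hi₀⟩).re)
    (f : ℝ → ℝ)
    (hfcont : ContinuousOn f (Set.Ici (1:ℝ)))
    (hfanti : AntitoneOn f (Set.Ici (1:ℝ)))
    (hfnonneg : ∀ t : ℝ, 1 ≤ t → 0 ≤ f t)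
    (hA2' : ∀ i : Fin M, (F i i).re ≤ f ((i : ℝ) + 1))
    (x : ℝ) (hx : 0 < x) (y : ℝ) (hy : 1 ≤ y) (hxy : (1 + α) * f y ≤ x) :
    ((Finset.univ.filter (fun i => x < hF.eigenvalues i)).card : ℝ)
      ≤ min (M : ℝ) y :=
  counting_bound_general_general F hF α hα hmono hA1' f hfanti hA2' x y hy hxy
end

section
/- Let M ≥ 1 and let F be an M×M Hermitian positive semidefinite complex matrix whose diagonal entries f_i := F_{i,i} satisfy f_1 ≥ f_2 ≥ … ≥ f_M ≥ 0 and assumption (A1) with constant α > 0, and suppose there are constants f_+ > 0 and γ > 0 such that f_i ≤ f_+ e^{−γ(i−1)} for all i = 1,…,M (exponential decay of the diagonal). Set ρ_+ := (1+α) f_+ and let κ > 0. Then the capacity C_M := Σ_{i=1}^M log₂(1 + κ M λ_i), where λ_1,…,λ_M are the eigenvalues of F, satisfies C_M ≤ ( γ^{−1} + ln(1 + κ ρ_+ M) + γ^{−1} (ln(1 + κ ρ_+ M))² ) / ln 2. -/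
/-!
The capacity is `log₂ det (1 + κM F)`. Hadamard's inequality for the positive semidefinite matrix
`1 + κM F` (rescale it to unit diagonal, then apply `x ≤ e^{x-1}` to its eigenvalues, whose sum is
the dimension) bounds it by `∑ log₂ (1 + κM fᵢ)`, and the decay of the diagonal bounds each term by
`log₂ (1 + A e^{-γi})` with `A = κ ρ₊ M`. For `ℓ t = log (1 + A e^{-γt})` the potential
`φ = ℓ² / 2 + ℓ` satisfies `φ' ≤ -γ ℓ`, so the tail `∑_{i ≥ 1} ℓ i` telescopes to at most `φ 0 / γ`.
-/

open scoped ComplexOrder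

theorem Real.prod_le_exp_sum_sub_one {ι : Type*} {s : Finset ι} {z : ι → ℝ}
    (hz : ∀ i ∈ s, 0 ≤ z i) : ∏ i ∈ s, z i ≤ Real.exp (∑ i ∈ s, (z i - 1)) := by
  rw [Real.exp_sum]
  exact Finset.prod_le_prod hz fun i _ => by linarith [Real.add_one_le_exp (z i - 1)]

namespace Matrix

variable {n 𝕜 : Type*} [Fintype n] [DecidableEq n] [RCLike 𝕜]

theorem IsHermitian.det_one_add_smul {A : Matrix n n 𝕜} (hA : A.IsHermitian)
    (c : ℝ) : (1 + (c : 𝕜) • A).det = ∏ i, ((1 + c * hA.eigenvalues i : ℝ) : 𝕜) := by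
  have hconj : 1 + (c : 𝕜) • A = Unitary.conjStarAlgAut 𝕜 _ hA.eigenvectorUnitary
      (diagonal fun i => ((1 + c * hA.eigenvalues i : ℝ) : 𝕜)) := by
    conv_lhs => rw [hA.spectral_theorem]
    rw [← map_one (Unitary.conjStarAlgAut 𝕜 _ hA.eigenvectorUnitary), ← map_smul, ← map_add]
    congr 1
    ext i j
    rcases eq_or_ne i j with rfl | h <;> simp [*]
  rw [hconj]
  simp [-Unitary.conjStarAlgAut_apply]

theorem PosSemidef.det_le_one_of_diag_eq_one {H : Matrix n n 𝕜}
    (hH : H.PosSemidef) (hdiag : ∀ i, H i i = 1) : H.det ≤ 1 := by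
  have htrace : ∑ i, hH.1.eigenvalues i = Fintype.card n := by
    have := hH.1.trace_eq_sum_eigenvalues
    simp only [trace, diag, hdiag, Finset.sum_const, Finset.card_univ, nsmul_one] at this
    exact_mod_cast this.symm
  have hprod : ∏ i, hH.1.eigenvalues i ≤ 1 := by
    calc ∏ i, hH.1.eigenvalues i ≤ Real.exp (∑ i, (hH.1.eigenvalues i - 1)) :=
          Real.prod_le_exp_sum_sub_one fun i _ => hH.eigenvalues_nonneg i
      _ = 1 := by simp [Finset.sum_sub_distrib, htrace]
  rw [hH.1.det_eq_prod_eigenvalues, ← RCLike.ofReal_prod, ← RCLike.ofReal_one]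
  exact RCLike.ofReal_le_ofReal.mpr hprod

theorem PosSemidef.det_le_prod_diag {G : Matrix n n 𝕜} (hG : G.PosSemidef)
    (hdiag : ∀ i, 0 < G i i) : G.det ≤ ∏ i, G i i := by
  choose d hd hdG using fun i => RCLike.pos_iff_exists_ofReal.mp (hdiag i)
  set b : n → 𝕜 := fun i => ((Real.sqrt (d i))⁻¹ : ℝ)
  have hb : ∀ i, b i * G i i * b i = 1 := fun i => by
    have hsqrt : (Real.sqrt (d i))⁻¹ * d i * (Real.sqrt (d i))⁻¹ = 1 := by
      rw [mul_right_comm, ← mul_inv, Real.mul_self_sqrt (hd i).le, inv_mul_cancel₀ (hd i).ne']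
    simp only [b, ← hdG i]
    exact_mod_cast hsqrt
  have hbB : (diagonal b)ᴴ = diagonal b := by
    simp [diagonal_conjTranspose, b, Pi.star_def]
  set H := diagonal b * G * (diagonal b)ᴴ
  have hH : H.PosSemidef := hG.mul_mul_conjTranspose_same _
  have hHdiag : ∀ i, H i i = 1 := fun i => by
    simp only [H, hbB, mul_diagonal, diagonal_mul, hb]
  have hdet : G.det = (∏ i, G i i) * H.det := by
    simp only [H, hbB, det_mul, det_diagonal]
    calc G.det = (∏ i, (b i * G i i * b i)) * G.det := by
          simp only [hb, Finset.prod_const_one, one_mul]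
      _ = _ := by rw [Finset.prod_mul_distrib, Finset.prod_mul_distrib]; ring
  rw [hdet]
  exact mul_le_of_le_one_right (Finset.prod_nonneg fun i _ => (hdiag i).le)
    (hH.det_le_one_of_diag_eq_one hHdiag)

theorem PosSemidef.prod_one_add_mul_eigenvalues_le {F : Matrix n n 𝕜} (hF : F.PosSemidef)
    {c : ℝ} (hc : 0 ≤ c) :
    ∏ i, (1 + c * hF.1.eigenvalues i) ≤ ∏ i, (1 + c * RCLike.re (F i i)) := by
  have hG : (1 + (c : 𝕜) • F).PosSemidef :=
    PosSemidef.one.add (hF.smul (RCLike.ofReal_nonneg.mpr hc))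
  have hGdiag : ∀ i, (1 + (c : 𝕜) • F) i i = ((1 + c * RCLike.re (F i i) : ℝ) : 𝕜) := fun i => by
    rw [add_apply, smul_apply, one_apply_eq, smul_eq_mul, ← hF.1.coe_re_apply_self i]
    push_cast
    rfl
  have hpos : ∀ i, 0 < 1 + c * RCLike.re (F i i) := fun i =>
    add_pos_of_pos_of_nonneg one_pos (mul_nonneg hc (RCLike.nonneg_iff.mp hF.diag_nonneg).1)
  have hdet := hG.det_le_prod_diag fun i => by
    rw [hGdiag i]; exact RCLike.ofReal_pos.mpr (hpos i)
  simp only [hF.1.det_one_add_smul, hGdiag, ← RCLike.ofReal_prod] at hdet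
  exact RCLike.ofReal_le_ofReal.mp hdet

theorem PosSemidef.sum_log_one_add_mul_eigenvalues_le_s13 {F : Matrix n n 𝕜} (hF : F.PosSemidef)
    {c : ℝ} (hc : 0 ≤ c) :
    ∑ i, Real.log (1 + c * hF.1.eigenvalues i) ≤ ∑ i, Real.log (1 + c * RCLike.re (F i i)) := by
  have hpos : ∀ x, 0 ≤ x → 0 < 1 + c * x := fun x hx => by positivity
  rw [← Real.log_prod fun i _ => (hpos _ (hF.eigenvalues_nonneg i)).ne',
    ← Real.log_prod fun i _ => (hpos _ (RCLike.nonneg_iff.mp hF.diag_nonneg).1).ne']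
  exact Real.log_le_log (Finset.prod_pos fun i _ => hpos _ (hF.eigenvalues_nonneg i))
    (hF.prod_one_add_mul_eigenvalues_le hc)

end Matrix

section ExpDecay

open Real

theorem log_one_add_le_mul_div_one_add {s : ℝ} (hs : 0 ≤ s) :
    log (1 + s) ≤ (log (1 + s) + 1) * (s / (1 + s)) := by
  rw [mul_div_assoc', le_div_iff₀ (by positivity)]
  nlinarith [log_le_sub_one_of_pos (show 0 < 1 + s by positivity)]

variable {A γ : ℝ}

theorem hasDerivAt_log_one_add_mul_exp (hA : 0 ≤ A) (t : ℝ) :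
    HasDerivAt (fun t => log (1 + A * exp (-(γ * t))))
      (-γ * (A * exp (-(γ * t)) / (1 + A * exp (-(γ * t))))) t := by
  have hexp : HasDerivAt (fun t => 1 + A * exp (-(γ * t))) (A * exp (-(γ * t)) * -γ) t :=
    ((((hasDerivAt_id' t).const_mul γ).neg.exp.const_mul A).const_add 1).congr_deriv
      (by simp only [Pi.neg_apply]; ring)
  exact (hexp.log (by positivity)).congr_deriv (by ring)

theorem antitone_log_one_add_mul_exp (hA : 0 ≤ A) (hγ : 0 ≤ γ) :
    Antitone fun t => log (1 + A * exp (-(γ * t))) := fun s t hst => by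
  dsimp only
  gcongr

theorem mul_log_one_add_mul_exp_le_sub (hA : 0 ≤ A) (hγ : 0 ≤ γ) {s t : ℝ} (hst : s ≤ t) :
    γ * (t - s) * log (1 + A * exp (-(γ * t))) ≤
      (log (1 + A * exp (-(γ * s))) ^ 2 / 2 + log (1 + A * exp (-(γ * s)))) -
      (log (1 + A * exp (-(γ * t))) ^ 2 / 2 + log (1 + A * exp (-(γ * t)))) := by
  set ℓ : ℝ → ℝ := fun t => log (1 + A * exp (-(γ * t)))
  have hφ : ∀ u, HasDerivAt (fun u => ℓ u ^ 2 / 2 + ℓ u)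
      (-γ * ((ℓ u + 1) * (A * exp (-(γ * u)) / (1 + A * exp (-(γ * u)))))) u := fun u =>
    ((((hasDerivAt_log_one_add_mul_exp hA u).pow 2).div_const 2).add
      (hasDerivAt_log_one_add_mul_exp hA u)).congr_deriv (by simp; ring)
  have hderiv : ∀ u ∈ interior (Set.Icc s t), deriv (fun u => ℓ u ^ 2 / 2 + ℓ u) u ≤ -γ * ℓ t := by
    intro u hu
    rw [interior_Icc] at hu
    rw [(hφ u).deriv]
    have := log_one_add_le_mul_div_one_add (by positivity : 0 ≤ A * exp (-(γ * u)))
    have := antitone_log_one_add_mul_exp hA hγ hu.2.le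
    nlinarith
  have := (convex_Icc s t).image_sub_le_mul_sub_of_deriv_le
    (fun u _ => (hφ u).continuousAt.continuousWithinAt)
    (fun u _ => (hφ u).differentiableAt.differentiableWithinAt) hderiv
    s (Set.left_mem_Icc.mpr hst) t (Set.right_mem_Icc.mpr hst) hst
  linarith

theorem sum_range_log_one_add_mul_exp_le (hA : 0 ≤ A) (hγ : 0 < γ) (M : ℕ) :
    ∑ i ∈ Finset.range M, log (1 + A * exp (-(γ * i))) ≤
      γ⁻¹ + log (1 + A) + γ⁻¹ * log (1 + A) ^ 2 := by
  set ℓ : ℝ → ℝ := fun t => log (1 + A * exp (-(γ * t)))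
  set φ : ℝ → ℝ := fun t => ℓ t ^ 2 / 2 + ℓ t
  have hℓ : ∀ t, 0 ≤ ℓ t := fun t => log_nonneg (le_add_of_nonneg_right (by positivity))
  have hℓ0 : ℓ 0 = log (1 + A) := by simp [ℓ]
  have htail : γ * ∑ i ∈ Finset.range M, ℓ (i + 1 : ℕ) ≤ φ 0 := by
    have hstep : ∀ i : ℕ, γ * ℓ (i + 1 : ℕ) ≤ φ i - φ (i + 1 : ℕ) := fun i => by
      have := mul_log_one_add_mul_exp_le_sub hA hγ.le (by linarith : (i : ℝ) ≤ i + 1)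
      push_cast
      simpa using this
    rw [Finset.mul_sum]
    calc ∑ i ∈ Finset.range M, γ * ℓ (i + 1 : ℕ)
        ≤ ∑ i ∈ Finset.range M, (φ i - φ (i + 1 : ℕ)) := Finset.sum_le_sum fun i _ => hstep i
      _ = φ 0 - φ M := by simpa using Finset.sum_range_sub' (fun i : ℕ => φ i) M
      _ ≤ φ 0 := by have := hℓ M; simp only [sub_le_self_iff, φ]; positivity
  calc ∑ i ∈ Finset.range M, ℓ i ≤ ∑ i ∈ Finset.range (M + 1), ℓ i :=
        Finset.sum_le_sum_of_subset_of_nonneg (by simp) fun i _ _ => hℓ i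
    _ = ℓ 0 + ∑ i ∈ Finset.range M, ℓ (i + 1 : ℕ) := by rw [Finset.sum_range_succ']; simp [add_comm]
    _ ≤ ℓ 0 + γ⁻¹ * φ 0 := by rw [← le_inv_mul_iff₀ hγ] at htail; linarith
    _ ≤ γ⁻¹ + log (1 + A) + γ⁻¹ * log (1 + A) ^ 2 := by
        simp only [φ, hℓ0]
        have hγ' := (inv_pos.mpr hγ).le
        linear_combination (mul_nonneg hγ' (sq_nonneg (log (1 + A) - 1)) + hγ') / 2

end ExpDecay

theorem capacity_log_bound_exponential_decay_general {M : ℕ}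
    (F : Matrix (Fin M) (Fin M) ℂ) (hF : F.PosSemidef)
    (α fplus γ κ : ℝ) (hα : 0 < α) (hfplus : 0 < fplus) (hγ : 0 < γ) (hκ : 0 < κ)
    (hA2 : ∀ i : Fin M, (F i i).re ≤ fplus * Real.exp (-γ * (i : ℝ))) :
    ∑ i, Real.logb 2 (1 + κ * M * hF.1.eigenvalues i)
      ≤ (γ⁻¹ + Real.log (1 + κ * ((1 + α) * fplus) * M)
          + γ⁻¹ * (Real.log (1 + κ * ((1 + α) * fplus) * M)) ^ 2) / Real.log 2 := by
  set A := κ * ((1 + α) * fplus) * M with hA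
  have hdiag : ∀ i : Fin M, κ * M * (F i i).re ≤ A * Real.exp (-(γ * i)) := fun i =>
    calc κ * M * (F i i).re ≤ κ * M * (fplus * Real.exp (-γ * i)) := by gcongr; exact hA2 i
      _ ≤ κ * M * (fplus * Real.exp (-γ * i)) + α * (κ * M * (fplus * Real.exp (-γ * i))) :=
          le_add_of_nonneg_right (by positivity)
      _ = A * Real.exp (-(γ * i)) := by rw [hA, neg_mul]; ring
  simp_rw [← Real.log_div_log, ← Finset.sum_div]
  refine div_le_div_of_nonneg_right ?_ (Real.log_pos one_lt_two).le
  calc ∑ i, Real.log (1 + κ * M * hF.1.eigenvalues i)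
      ≤ ∑ i, Real.log (1 + κ * M * (F i i).re) :=
        hF.sum_log_one_add_mul_eigenvalues_le_s13 (by positivity)
    _ ≤ ∑ i : Fin M, Real.log (1 + A * Real.exp (-(γ * i))) := Finset.sum_le_sum fun i _ => by
        have := (RCLike.nonneg_iff.mp (hF.diag_nonneg (i := i))).1
        exact Real.log_le_log (by positivity) (by linarith [hdiag i])
    _ = ∑ i ∈ Finset.range M, Real.log (1 + A * Real.exp (-(γ * i))) :=
        Fin.sum_univ_eq_sum_range (fun i : ℕ => Real.log (1 + A * Real.exp (-(γ * i)))) M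
    _ ≤ _ := sum_range_log_one_add_mul_exp_le (by positivity) hγ M

/-- Under (A1) and exponential decay `f_i ≤ f₊ e^{-γ(i-1)}` of the diagonal
(γ > 0), the capacity `C_M = ∑ᵢ log₂(1 + κ M λᵢ)` is bounded by a polynomial in
`ln(1 + κ ρ₊ M)`, namely `(γ⁻¹ + ln(1+κρ₊M) + γ⁻¹ ln(1+κρ₊M)²)/ln 2` with `ρ₊=(1+α)f₊`. -/
theorem capacity_log_bound_exponential_decay {M : ℕ} (hM : 1 ≤ M)
    (F : Matrix (Fin M) (Fin M) ℂ) (hF : F.PosSemidef)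
    (α fplus γ κ : ℝ) (hα : 0 < α) (hfplus : 0 < fplus) (hγ : 0 < γ) (hκ : 0 < κ)
    (hmono : ∀ i j : Fin M, i ≤ j → (F j j).re ≤ (F i i).re)
    (hnonneg : ∀ i : Fin M, 0 ≤ (F i i).re)
    (hA1 : ∀ i : Fin M,
      ∑ p ∈ Finset.univ.filter (fun p : Fin M × Fin M => i ≤ p.1 ∧ p.1 < p.2),
        ‖F p.1 p.2‖ ≤ α * (F i i).re)
    (hA2 : ∀ i : Fin M, (F i i).re ≤ fplus * Real.exp (-γ * (i : ℝ))) :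
    ∑ i, Real.logb 2 (1 + κ * M * hF.1.eigenvalues i)
      ≤ (γ⁻¹ + Real.log (1 + κ * ((1 + α) * fplus) * M)
          + γ⁻¹ * (Real.log (1 + κ * ((1 + α) * fplus) * M)) ^ 2) / Real.log 2 :=
  capacity_log_bound_exponential_decay_general F hF α fplus γ κ hα hfplus hγ hκ hA2
end
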